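/- arXiv:1701.07216 — 3 statements merged into one kernel-verified Lean document; each statement's English description precedes it below -/
import Mathlib

section
/- For every n ≥ 1, the sum over all type B alternative tableaux T of size n of x^{urr(T)-1} equals 2^n (x+1)_{n-1}, where urr(T) is the number of unrestricted rows. -/
open Finset Polynomial
open scoped Classical

/-! ### Tree-like tableaux (grid model)
A cell is a pair (row index, column index), both 0-based.  A Ferrers diagram
is a finite lower set of cells.  A tree-like tableau of size `n` is a pair
`(F, P)` where `P` is the set of pointed cells of the diagram `F`. -/

def IsFerrersGrid (F : Finset (ℕ × ℕ)) : Prop :=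
  ∀ p ∈ F, ∀ i j : ℕ, i ≤ p.1 → j ≤ p.2 → (i, j) ∈ F

def IsTLT (F P : Finset (ℕ × ℕ)) : Prop :=
  F.Nonempty ∧ IsFerrersGrid F ∧ P ⊆ F ∧ (0, 0) ∈ P ∧
  (∀ p ∈ P, p ≠ (0, 0) →
    Xor' (∃ i < p.1, (i, p.2) ∈ P) (∃ j < p.2, (p.1, j) ∈ P)) ∧
  (∀ p ∈ F, ∃ q ∈ P, q.1 = p.1) ∧
  (∀ p ∈ F, ∃ q ∈ P, q.2 = p.2)

/-- The finite set of tree-like tableaux of size `n`. -/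
noncomputable def TLT (n : ℕ) : Finset (Finset (ℕ × ℕ) × Finset (ℕ × ℕ)) :=
  ((Finset.range n ×ˢ Finset.range n).powerset ×ˢ
    (Finset.range n ×ˢ Finset.range n).powerset).filter
    (fun T => IsTLT T.1 T.2 ∧ T.2.card = n)

/-- number of non-root points in the topmost row -/
noncomputable def topT (P : Finset (ℕ × ℕ)) : ℕ :=
  (P.filter (fun p => p.1 = 0 ∧ p.2 ≠ 0)).card
/-- number of non-root points in the leftmost column -/
noncomputable def leftT (P : Finset (ℕ × ℕ)) : ℕ :=
  (P.filter (fun p => p.2 = 0 ∧ p.1 ≠ 0)).card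
/-- corners of a Ferrers diagram -/
noncomputable def cornersT (F : Finset (ℕ × ℕ)) : Finset (ℕ × ℕ) :=
  F.filter (fun p => (p.1 + 1, p.2) ∉ F ∧ (p.1, p.2 + 1) ∉ F)
/-- non-occupied corners -/
noncomputable def nocT (F P : Finset (ℕ × ℕ)) : ℕ :=
  ((cornersT F).filter (fun p => p ∉ P)).card
/-- occupied corners -/
noncomputable def ocT (F P : Finset (ℕ × ℕ)) : ℕ :=
  ((cornersT F).filter (fun p => p ∈ P)).card
/-- symmetric (invariant under reflection across the main diagonal) -/
def IsSymTLT (F P : Finset (ℕ × ℕ)) : Prop :=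
  F.image Prod.swap = F ∧ P.image Prod.swap = P

/-! ### Alternative tableaux (border-label model)
A Ferrers diagram of size `n` (empty rows and columns allowed) is encoded by
the set `C ⊆ {1,…,n}` of its column labels (labels of the south-east border
steps, read from north-east to south-west); the remaining labels are row
labels.  Row `r` and column `c` intersect in a cell (written `(r, c)`)
exactly when `r < c`.  Inside a row, cells further to the left have *larger*
column labels; inside a column, cells further up have *smaller* row labels.
An alternative tableau is `(C, L, U)` where `L` (resp. `U`) is the set of
cells containing a left (resp. up) arrow. -/

def IsAT (n : ℕ) (C : Finset ℕ) (L U : Finset (ℕ × ℕ)) : Prop :=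
  C ⊆ Finset.Icc 1 n ∧ Disjoint L U ∧
  (∀ p ∈ L ∪ U, p.1 ∈ Finset.Icc 1 n ∧ p.1 ∉ C ∧ p.2 ∈ C ∧ p.1 < p.2) ∧
  (∀ p ∈ L, ∀ c' : ℕ, p.2 < c' → (p.1, c') ∉ L ∪ U) ∧
  (∀ p ∈ U, ∀ r' : ℕ, r' < p.1 → (r', p.2) ∉ L ∪ U)

/-- the finite set of alternative tableaux of size `n` -/
noncomputable def ATset (n : ℕ) :
    Finset (Finset ℕ × Finset (ℕ × ℕ) × Finset (ℕ × ℕ)) :=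
  ((Finset.Icc 1 n).powerset ×ˢ
    ((Finset.Icc 1 n ×ˢ Finset.Icc 1 n).powerset ×ˢ
      (Finset.Icc 1 n ×ˢ Finset.Icc 1 n).powerset)).filter
    (fun T => IsAT n T.1 T.2.1 T.2.2)

/-- alternative tableaux of size `n` in which every column contains an up arrow -/
noncomputable def ATstar (n : ℕ) :
    Finset (Finset ℕ × Finset (ℕ × ℕ) × Finset (ℕ × ℕ)) :=
  (ATset n).filter (fun T => ∀ c ∈ T.1, ∃ p ∈ T.2.2, p.2 = c)

/-- label of the topmost row -/
noncomputable def topRowA (n : ℕ) (C : Finset ℕ) : ℕ :=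
  WithTop.untopD 0 ((Finset.Icc 1 n \ C).min)
/-- number of arrows in the topmost row -/
noncomputable def topA (n : ℕ) (C : Finset ℕ) (L U : Finset (ℕ × ℕ)) : ℕ :=
  ((L ∪ U).filter (fun p => p.1 = topRowA n C)).card
/-- number of unrestricted rows (rows with no left arrow) -/
noncomputable def urrA (n : ℕ) (C : Finset ℕ) (L : Finset (ℕ × ℕ)) : ℕ :=
  ((Finset.Icc 1 n \ C).filter (fun r => ∀ p ∈ L, p.1 ≠ r)).card
/-- number of non-occupied corners (the corners are exactly the cells `(c-1, c)`
with `c` a column label and `c-1` a row label) -/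
noncomputable def nocA (n : ℕ) (C : Finset ℕ) (L U : Finset (ℕ × ℕ)) : ℕ :=
  (C.filter (fun c => c - 1 ∈ Finset.Icc 1 n \ C ∧ (c - 1, c) ∉ L ∪ U)).card
/-- symmetric alternative tableau of size `2n` (reflection across the main
diagonal exchanges border label `k` with `2n+1-k`, rows with columns and
left arrows with up arrows) -/
def IsSymAT (n : ℕ) (C : Finset ℕ) (L U : Finset (ℕ × ℕ)) : Prop :=
  (∀ k ∈ Finset.Icc 1 (2 * n), (k ∈ C ↔ (2 * n + 1 - k) ∉ C)) ∧
  (∀ r c : ℕ, (r, c) ∈ L ↔ (2 * n + 1 - c, 2 * n + 1 - r) ∈ U)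

/-! ### Linked partitions (linear representation / arc model)
A linked partition of `{1,…,n}` is identified with its set of arcs `(i, j)`,
`i < j`: each vertex is the right-hand endpoint of at most one arc. -/

def IsLP (n : ℕ) (A : Finset (ℕ × ℕ)) : Prop :=
  (∀ p ∈ A, 1 ≤ p.1 ∧ p.1 < p.2 ∧ p.2 ≤ n) ∧
  (∀ p ∈ A, ∀ q ∈ A, p.2 = q.2 → p.1 = q.1)

noncomputable def LP (n : ℕ) : Finset (Finset (ℕ × ℕ)) :=
  ((Finset.Icc 1 n ×ˢ Finset.Icc 1 n).powerset).filter (IsLP n)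

/-- number of origins plus singletons (= vertices with no incoming arc) -/
noncomputable def osL (n : ℕ) (A : Finset (ℕ × ℕ)) : ℕ :=
  ((Finset.Icc 1 n).filter (fun j => ∀ p ∈ A, p.2 ≠ j)).card
/-- number of arcs with left-hand endpoint `1` -/
noncomputable def oneL (A : Finset (ℕ × ℕ)) : ℕ :=
  (A.filter (fun p => p.1 = 1)).card
/-- a destination: only a right-hand endpoint -/
def IsDest (A : Finset (ℕ × ℕ)) (j : ℕ) : Prop :=
  (∃ p ∈ A, p.2 = j) ∧ ∀ p ∈ A, p.1 ≠ j

/-- consecutive pairs of a finite set of naturals -/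
noncomputable def consecPairs (S : Finset ℕ) : Finset (ℕ × ℕ) :=
  (S ×ˢ S).filter (fun p => p.1 < p.2 ∧ ∀ k ∈ S, ¬(p.1 < k ∧ k < p.2))

/-- the set of row labels of cells of column `c` containing an arrow -/
noncomputable def colRows (L U : Finset (ℕ × ℕ)) (c : ℕ) : Finset ℕ :=
  ((L ∪ U).filter (fun p => p.2 = c)).image Prod.fst

/-- the map `Φ`: for each column `j`, with the up arrow in row `i₁` and the
left arrows in rows `i₂ < … < i_t`, draw the arcs `(i₁,i₂), …, (i_{t-1},i_t), (i_t, j)`,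
i.e. the consecutive pairs of `{i₁,…,i_t, j}`. -/
noncomputable def Phi (T : Finset ℕ × Finset (ℕ × ℕ) × Finset (ℕ × ℕ)) :
    Finset (ℕ × ℕ) :=
  T.1.biUnion (fun c => consecPairs (insert c (colRows T.2.1 T.2.2 c)))

/-! ### Type B alternative tableaux
Encoded by `(C, L, U)` with `C ⊆ Icc 1 n` the set of column labels of the
subdiagram; rows of the shifted diagram are labelled by
`(Icc 1 n \ C) ∪ (-C)`, rows higher up having smaller labels.  Row `x` and
column `c` intersect in a cell exactly when (`x > 0` and `x < c`) or
(`x < 0` and `-x ≤ c`); the cell `(-c, c)` is the diagonal cell of row `-c`. -/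

def cellB (n : ℕ) (C : Finset ℤ) (x c : ℤ) : Prop :=
  c ∈ C ∧ ((1 ≤ x ∧ x ≤ (n : ℤ) ∧ x ∉ C ∧ x < c) ∨ (x < 0 ∧ -x ∈ C ∧ -x ≤ c))

def IsATB (n : ℕ) (C : Finset ℤ) (L U : Finset (ℤ × ℤ)) : Prop :=
  C ⊆ Finset.Icc 1 (n : ℤ) ∧ Disjoint L U ∧
  (∀ p ∈ L ∪ U, p.2 ∈ C ∧
    ((1 ≤ p.1 ∧ p.1 ≤ (n : ℤ) ∧ p.1 ∉ C ∧ p.1 < p.2) ∨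
      (p.1 < 0 ∧ -p.1 ∈ C ∧ -p.1 < p.2))) ∧
  (∀ p ∈ L, ∀ c' : ℤ, p.2 < c' → (p.1, c') ∉ L ∪ U) ∧
  (∀ p ∈ U, ∀ x' : ℤ, x' < p.1 → (x', p.2) ∉ L ∪ U) ∧
  (∀ i ∈ C, (∃ p ∈ U, p.2 = i) → ∀ c' : ℤ, (-i, c') ∉ L ∪ U)

noncomputable def ATB (n : ℕ) :
    Finset (Finset ℤ × Finset (ℤ × ℤ) × Finset (ℤ × ℤ)) :=
  ((Finset.Icc (1 : ℤ) (n : ℤ)).powerset ×ˢ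
    ((Finset.Icc (-(n : ℤ)) (n : ℤ) ×ˢ Finset.Icc (1 : ℤ) (n : ℤ)).powerset ×ˢ
      (Finset.Icc (-(n : ℤ)) (n : ℤ) ×ˢ Finset.Icc (1 : ℤ) (n : ℤ)).powerset)).filter
    (fun T => IsATB n T.1 T.2.1 T.2.2)

/-- the row labels of a type B alternative tableau -/
noncomputable def rowsB (n : ℕ) (C : Finset ℤ) : Finset ℤ :=
  (Finset.Icc (1 : ℤ) (n : ℤ) \ C) ∪ C.image (fun c => -c)

/-- number of unrestricted rows: row `x` is unrestricted when it contains no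
left arrow and column `|x|` (if it exists) contains no up arrow -/
noncomputable def urrB (n : ℕ) (C : Finset ℤ) (L U : Finset (ℤ × ℤ)) : ℕ :=
  ((rowsB n C).filter (fun x => (∀ p ∈ L, p.1 ≠ x) ∧ ∀ p ∈ U, p.2 ≠ |x|)).card

/-- the corners of the shifted Ferrers diagram -/
noncomputable def cornersB (n : ℕ) (C : Finset ℤ) : Finset (ℤ × ℤ) :=
  (Finset.Icc (-(n : ℤ)) (n : ℤ) ×ˢ Finset.Icc (1 : ℤ) (n : ℤ)).filter
    (fun p => cellB n C p.1 p.2 ∧ (∀ x' : ℤ, p.1 < x' → ¬ cellB n C x' p.2) ∧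
      (∀ c' : ℤ, c' < p.2 → ¬ cellB n C p.1 c'))

/-- number of non-occupied diagonal corners -/
noncomputable def nocDiagB (n : ℕ) (C : Finset ℤ) (L U : Finset (ℤ × ℤ)) : ℕ :=
  ((cornersB n C).filter (fun p => p.1 = -p.2 ∧ p ∉ L ∪ U)).card
/-- number of non-occupied non-diagonal corners -/
noncomputable def nocOffB (n : ℕ) (C : Finset ℤ) (L U : Finset (ℤ × ℤ)) : ℕ :=
  ((cornersB n C).filter (fun p => p.1 ≠ -p.2 ∧ p ∉ L ∪ U)).card

/-! ### Type B linked partitions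
A pair `(V, A)`: for each `i ∈ {1,…,n}` exactly one of `i, -i` belongs to
the vertex set `V`; `A` is the set of arcs `(x, y)`, `x < y`, with each
vertex the right-hand endpoint of at most one arc. -/

def IsLPB (n : ℕ) (V : Finset ℤ) (A : Finset (ℤ × ℤ)) : Prop :=
  (∀ v ∈ V, 1 ≤ |v| ∧ |v| ≤ (n : ℤ)) ∧
  (∀ i ∈ Finset.Icc (1 : ℤ) (n : ℤ), ((i ∈ V ∧ -i ∉ V) ∨ (-i ∈ V ∧ i ∉ V))) ∧
  (∀ p ∈ A, p.1 ∈ V ∧ p.2 ∈ V ∧ p.1 < p.2) ∧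
  (∀ p ∈ A, ∀ q ∈ A, p.2 = q.2 → p.1 = q.1)

noncomputable def LPB (n : ℕ) : Finset (Finset ℤ × Finset (ℤ × ℤ)) :=
  ((Finset.Icc (-(n : ℤ)) (n : ℤ)).powerset ×ˢ
    (Finset.Icc (-(n : ℤ)) (n : ℤ) ×ˢ Finset.Icc (-(n : ℤ)) (n : ℤ)).powerset).filter
    (fun T => IsLPB n T.1 T.2)

/-- number of origins plus singletons (= vertices with no incoming arc) -/
noncomputable def osB (V : Finset ℤ) (A : Finset (ℤ × ℤ)) : ℕ :=
  (V.filter (fun v => ∀ p ∈ A, p.2 ≠ v)).card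

/-- a legal destination: `j` is only a right-hand endpoint, and its incoming
arc `(a, j)` satisfies `|a| < |j|` -/
def IsLegalDestB (A : Finset (ℤ × ℤ)) (j : ℤ) : Prop :=
  (∃ p ∈ A, p.2 = j ∧ |p.1| < |j|) ∧ ∀ p ∈ A, p.1 ≠ j

/-- consecutive pairs of a finite set of integers -/
noncomputable def consecPairsZ (S : Finset ℤ) : Finset (ℤ × ℤ) :=
  (S ×ˢ S).filter (fun p => p.1 < p.2 ∧ ∀ k ∈ S, ¬(p.1 < k ∧ k < p.2))

/-- row labels of cells of column `c` containing an arrow -/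
noncomputable def colRowsB (L U : Finset (ℤ × ℤ)) (c : ℤ) : Finset ℤ :=
  ((L ∪ U).filter (fun p => p.2 = c)).image Prod.fst

/-- column `c` contains an up arrow -/
def HasUp (U : Finset (ℤ × ℤ)) (c : ℤ) : Prop := ∃ p ∈ U, p.2 = c

/-- the map `Φ_B`: columns with an up arrow give positive vertices and chains
of arcs through their arrows (consecutive pairs of the arrow rows together
with the column label); columns without an up arrow give negative vertices
`-j` and arcs from `-j` to each row containing a left arrow of that column;
rows give positive vertices. -/
noncomputable def PhiB (n : ℕ) (T : Finset ℤ × Finset (ℤ × ℤ) × Finset (ℤ × ℤ)) :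
    Finset ℤ × Finset (ℤ × ℤ) :=
  ((Finset.Icc (1 : ℤ) (n : ℤ) \ T.1) ∪ T.1.filter (fun c => HasUp T.2.2 c) ∪
      (T.1.filter (fun c => ¬ HasUp T.2.2 c)).image (fun c => -c),
    (T.1.filter (fun c => HasUp T.2.2 c)).biUnion
        (fun c => consecPairsZ (insert c (colRowsB T.2.1 T.2.2 c))) ∪
      (T.1.filter (fun c => ¬ HasUp T.2.2 c)).biUnion
        (fun c => (colRowsB T.2.1 T.2.2 c).image (fun r => (-c, r))))

namespace ATBaux

abbrev Tab : Type := Finset ℤ × Finset (ℤ × ℤ) × Finset (ℤ × ℤ)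

lemma mem_ATB {n : ℕ} {T : Tab} : T ∈ ATB n ↔ IsATB n T.1 T.2.1 T.2.2 := by
  unfold ATB
  simp only [mem_filter, mem_product, mem_powerset]
  refine ⟨fun h => h.2, fun h => ⟨⟨h.1, ?_, ?_⟩, h⟩⟩
  · intro p hp
    have h3 := h.2.2.1 p (mem_union_left _ hp)
    have hc := h.1 h3.1
    simp only [mem_Icc] at hc
    simp only [mem_product, mem_Icc]
    rcases h3.2 with ⟨h1, h2, _, _⟩ | ⟨h1, h2, _⟩
    · exact ⟨⟨by linarith, by linarith⟩, hc⟩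
    · have := h.1 h2
      simp only [mem_Icc] at this
      exact ⟨⟨by linarith, by linarith⟩, hc⟩
  · intro p hp
    have h3 := h.2.2.1 p (mem_union_right _ hp)
    have hc := h.1 h3.1
    simp only [mem_Icc] at hc
    simp only [mem_product, mem_Icc]
    rcases h3.2 with ⟨h1, h2, _, _⟩ | ⟨h1, h2, _⟩
    · exact ⟨⟨by linarith, by linarith⟩, hc⟩
    · have := h.1 h2
      simp only [mem_Icc] at this
      exact ⟨⟨by linarith, by linarith⟩, hc⟩

lemma mem_rowsB {n : ℕ} {C : Finset ℤ} {r : ℤ} :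
    r ∈ rowsB n C ↔ ((1 ≤ r ∧ r ≤ (n : ℤ) ∧ r ∉ C) ∨ -r ∈ C) := by
  unfold rowsB
  simp only [mem_union, mem_sdiff, mem_Icc, mem_image]
  constructor
  · rintro (⟨⟨h1, h2⟩, h3⟩ | ⟨c, hc, rfl⟩)
    · exact Or.inl ⟨h1, h2, h3⟩
    · right; simpa using hc
  · rintro (⟨h1, h2, h3⟩ | h)
    · exact Or.inl ⟨⟨h1, h2⟩, h3⟩
    · exact Or.inr ⟨-r, h, by ring⟩

-- CHUNK2: basic facts within context of a valid tableau
noncomputable def NN (m : ℕ) (T : Tab) : Finset ℤ :=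
  (rowsB m T.1).filter (fun x => (∀ p ∈ T.2.1, p.1 ≠ x) ∧ ∀ p ∈ T.2.2, p.2 ≠ |x|)

lemma urrB_eq_card (m : ℕ) (T : Tab) : urrB m T.1 T.2.1 T.2.2 = (NN m T).card := rfl

section facts
variable {m : ℕ} {C : Finset ℤ} {L U : Finset (ℤ × ℤ)}

/-- facts about an arrow of a valid size-m tableau -/
lemma arrow_facts (h : IsATB m C L U) {p : ℤ × ℤ} (hp : p ∈ L ∪ U) :
    p.2 ∈ C ∧ 1 ≤ p.2 ∧ p.2 ≤ (m : ℤ) ∧ -(m:ℤ) ≤ p.1 ∧ p.1 < p.2 := by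
  obtain ⟨h2, hcase⟩ := h.2.2.1 p hp
  have hc := h.1 h2
  simp only [mem_Icc] at hc
  rcases hcase with ⟨h1, _, _, h4⟩ | ⟨h1, h5, h6⟩
  · exact ⟨h2, hc.1, hc.2, by linarith, h4⟩
  · have := h.1 h5
    simp only [mem_Icc] at this
    exact ⟨h2, hc.1, hc.2, by linarith, by linarith⟩

lemma row_facts (hC : C ⊆ Finset.Icc 1 (m:ℤ)) {r : ℤ} (hr : r ∈ rowsB m C) :
    r ≠ (m:ℤ)+1 ∧ r ≠ -((m:ℤ)+1) ∧ |r| ≤ (m:ℤ) ∧ r ≠ 0 := by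
  rw [mem_rowsB] at hr
  rcases hr with ⟨h1, h2, _⟩ | h
  · refine ⟨by omega, by omega, by rw [abs_of_pos (by omega)]; omega, by omega⟩
  · have := hC h
    simp only [mem_Icc] at this
    refine ⟨by omega, by omega, by rw [abs_of_neg (by omega)]; omega, by omega⟩

lemma NN_subset_rowsB {T : Tab} : NN m T ⊆ rowsB m T.1 := filter_subset _ _

lemma mem_NN {T : Tab} {r : ℤ} :
    r ∈ NN m T ↔ r ∈ rowsB m T.1 ∧ (∀ p ∈ T.2.1, p.1 ≠ r) ∧ ∀ p ∈ T.2.2, p.2 ≠ |r| := by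
  unfold NN; simp [mem_filter]

end facts

-- CHUNK3: glue / split definitions
noncomputable def fiberOptions (m : ℕ) (T : Tab) : Finset (Option (Finset ℤ × Bool)) :=
  insert none ((((NN m T).powerset).image (fun S => some (S, false))) ∪
    ((((NN m T).powerset).filter (fun S => S ≠ ∅)).image (fun S => some (S, true))))

def dsize : Option (Finset ℤ × Bool) → ℕ
  | none => 0
  | some (S, _) => S.card

noncomputable def glue (m : ℕ) (T : Tab) : Option (Finset ℤ × Bool) → Tab
  | none => T
  | some (S, false) =>
      (insert ((m:ℤ)+1) T.1, T.2.1 ∪ S.image (fun r => (r, (m:ℤ)+1)), T.2.2)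
  | some (S, true) =>
      (insert ((m:ℤ)+1) T.1,
        T.2.1 ∪ (S.erase (S.min.untopD 0)).image (fun r => (r, (m:ℤ)+1)),
        insert ((S.min.untopD 0), (m:ℤ)+1) T.2.2)

noncomputable def splitT (m : ℕ) (T : Tab) : (_ : Tab) × Option (Finset ℤ × Bool) :=
  if ((m:ℤ)+1) ∈ T.1 then
    ⟨(T.1.erase ((m:ℤ)+1), T.2.1.filter (fun p => p.2 ≠ (m:ℤ)+1),
        T.2.2.filter (fun p => p.2 ≠ (m:ℤ)+1)),
      some ((((T.2.1 ∪ T.2.2).filter (fun p => p.2 = (m:ℤ)+1)).image Prod.fst,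
        if ∃ p ∈ T.2.2, p.2 = (m:ℤ)+1 then true else false))⟩
  else ⟨T, none⟩

lemma min_spec {S : Finset ℤ} (hS : S ≠ ∅) :
    S.min.untopD 0 ∈ S ∧ ∀ r ∈ S, S.min.untopD 0 ≤ r := by
  have hne : S.Nonempty := nonempty_iff_ne_empty.mpr hS
  have : S.min.untopD 0 = S.min' hne := by
    rw [← Finset.coe_min' hne, WithTop.untopD_coe]
  rw [this]
  exact ⟨S.min'_mem hne, fun r hr => S.min'_le r hr⟩

lemma mem_fiberOptions {m : ℕ} {T : Tab} {d : Option (Finset ℤ × Bool)} :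
    d ∈ fiberOptions m T ↔
      d = none ∨ ∃ S : Finset ℤ, S ⊆ NN m T ∧
        (d = some (S, false) ∨ (d = some (S, true) ∧ S ≠ ∅)) := by
  unfold fiberOptions
  simp only [mem_insert, mem_union, mem_image, mem_filter, mem_powerset]
  constructor
  · rintro (rfl | ⟨S, hS, rfl⟩ | ⟨S, ⟨hS, hne⟩, rfl⟩)
    · exact Or.inl rfl
    · exact Or.inr ⟨S, hS, Or.inl rfl⟩
    · exact Or.inr ⟨S, hS, Or.inr ⟨rfl, hne⟩⟩
  · rintro (rfl | ⟨S, hS, (rfl | ⟨rfl, hne⟩)⟩)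
    · exact Or.inl rfl
    · exact Or.inr (Or.inl ⟨S, hS, rfl⟩)
    · exact Or.inr (Or.inr ⟨S, ⟨hS, hne⟩, rfl⟩)

-- CHUNK4: glue validity
section glue_valid
variable {m : ℕ} {C : Finset ℤ} {L U : Finset (ℤ × ℤ)}

lemma cast_succ (m : ℕ) : ((m+1:ℕ):ℤ) = (m:ℤ)+1 := by push_cast; ring

lemma glue_a_isATB (h : IsATB m C L U) : IsATB (m+1) C L U := by
  obtain ⟨hC, hdisj, h3, hL, hU, hdiag⟩ := h
  rw [IsATB, cast_succ]
  refine ⟨fun c hc => ?_, hdisj, fun p hp => ?_, hL, hU, hdiag⟩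
  · have := hC hc; simp only [mem_Icc] at *; omega
  · obtain ⟨h1, h2⟩ := h3 p hp
    refine ⟨h1, ?_⟩
    rcases h2 with ⟨a1, a2, a3, a4⟩ | hneg
    · exact Or.inl ⟨a1, by omega, a3, a4⟩
    · exact Or.inr hneg

/-- facts about an element of `NN` -/
lemma NN_facts (hC : C ⊆ Finset.Icc 1 (m:ℤ)) {r : ℤ} (hr : r ∈ NN m (C, L, U)) :
    ((1 ≤ r ∧ r ≤ (m:ℤ) ∧ r ∉ C) ∨ (r < 0 ∧ -r ∈ C ∧ -r ≤ (m:ℤ))) ∧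
      (∀ p ∈ L, p.1 ≠ r) ∧ (∀ p ∈ U, p.2 ≠ |r|) := by
  obtain ⟨h1, h2, h3⟩ := mem_NN.mp hr
  refine ⟨?_, h2, h3⟩
  rcases mem_rowsB.mp h1 with ⟨a1, a2, a3⟩ | hneg
  · exact Or.inl ⟨a1, a2, a3⟩
  · have := hC hneg; simp only [mem_Icc] at this
    exact Or.inr ⟨by omega, hneg, by omega⟩

lemma glue_b_isATB (h : IsATB m C L U) {S : Finset ℤ} (hS : S ⊆ NN m (C, L, U)) :
    IsATB (m+1) (insert ((m:ℤ)+1) C) (L ∪ S.image (fun r => (r, (m:ℤ)+1))) U := by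
  have hC := h.1
  have hfact : ∀ r ∈ S,
      ((1 ≤ r ∧ r ≤ (m:ℤ) ∧ r ∉ C) ∨ (r < 0 ∧ -r ∈ C ∧ -r ≤ (m:ℤ))) ∧
        (∀ p ∈ L, p.1 ≠ r) ∧ (∀ p ∈ U, p.2 ≠ |r|) :=
    fun r hr => NN_facts hC (hS hr)
  have harr : ∀ p ∈ L ∪ U, p.2 ∈ C ∧ 1 ≤ p.2 ∧ p.2 ≤ (m : ℤ) ∧ -(m:ℤ) ≤ p.1 ∧ p.1 < p.2 :=
    fun p hp => arrow_facts h hp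
  obtain ⟨-, hdisj, h3, hL, hU, hdiag⟩ := h
  rw [IsATB, cast_succ]
  refine ⟨?_, ?_, ?_, ?_, ?_, ?_⟩
  · intro c hc
    rcases mem_insert.mp hc with rfl | hc
    · simp only [mem_Icc]; omega
    · have := hC hc; simp only [mem_Icc] at *; omega
  · rw [Finset.disjoint_union_left]
    refine ⟨hdisj, ?_⟩
    rw [Finset.disjoint_left]
    rintro p hp hpU
    obtain ⟨r, hr, rfl⟩ := mem_image.mp hp
    have := (harr _ (mem_union_right _ hpU)).2.2.1
    simp only at this; omega
  · intro p hp
    rcases mem_union.mp hp with hp | hpU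
    · rcases mem_union.mp hp with hp | hp
      · obtain ⟨h1, h2⟩ := h3 p (mem_union_left _ hp)
        have hb := harr p (mem_union_left _ hp)
        refine ⟨mem_insert_of_mem h1, ?_⟩
        rcases h2 with ⟨a1, a2, a3, a4⟩ | hneg
        · refine Or.inl ⟨a1, by omega, ?_, a4⟩
          rw [mem_insert]; push_neg
          exact ⟨by omega, a3⟩
        · exact Or.inr ⟨hneg.1, mem_insert_of_mem hneg.2.1, hneg.2.2⟩
      · obtain ⟨r, hr, rfl⟩ := mem_image.mp hp
        refine ⟨mem_insert_self _ _, ?_⟩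
        rcases (hfact r hr).1 with ⟨a1, a2, a3⟩ | ⟨a1, a2, a3⟩
        · refine Or.inl ⟨a1, by omega, ?_, by omega⟩
          rw [mem_insert]; push_neg
          exact ⟨by omega, a3⟩
        · exact Or.inr ⟨a1, mem_insert_of_mem a2, by omega⟩
    · obtain ⟨h1, h2⟩ := h3 p (mem_union_right _ hpU)
      have hb := harr p (mem_union_right _ hpU)
      refine ⟨mem_insert_of_mem h1, ?_⟩
      rcases h2 with ⟨a1, a2, a3, a4⟩ | hneg
      · refine Or.inl ⟨a1, by omega, ?_, a4⟩
        rw [mem_insert]; push_neg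
        exact ⟨by omega, a3⟩
      · exact Or.inr ⟨hneg.1, mem_insert_of_mem hneg.2.1, hneg.2.2⟩
  · rintro p hp c' hc' hmem
    rcases mem_union.mp hp with hpL | hpim
    · rcases mem_union.mp hmem with hm | hmU
      · rcases mem_union.mp hm with hm | hmim
        · exact hL p hpL c' hc' (mem_union_left _ hm)
        · obtain ⟨r, hr, he⟩ := mem_image.mp hmim
          obtain ⟨he1, he2⟩ := (Prod.mk.injEq _ _ _ _).mp he
          exact (hfact r hr).2.1 p hpL he1.symm
      · exact hL p hpL c' hc' (mem_union_right _ hmU)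
    · obtain ⟨r, hr, rfl⟩ := mem_image.mp hpim
      simp only at hc'
      rcases mem_union.mp hmem with hm | hmU
      · rcases mem_union.mp hm with hm | hmim
        · have := (harr _ (mem_union_left _ hm)).2.2.1; simp only at this; omega
        · obtain ⟨r', hr', he⟩ := mem_image.mp hmim
          have : c' = (m:ℤ)+1 := ((Prod.mk.injEq _ _ _ _).mp he).2.symm
          omega
      · have := (harr _ (mem_union_right _ hmU)).2.2.1; simp only at this; omega
  · rintro p hpU x' hx' hmem
    rcases mem_union.mp hmem with hm | hmU
    · rcases mem_union.mp hm with hm | hmim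
      · exact hU p hpU x' hx' (mem_union_left _ hm)
      · obtain ⟨r, hr, he⟩ := mem_image.mp hmim
        have h2 : p.2 = (m:ℤ)+1 := ((Prod.mk.injEq _ _ _ _).mp he).2.symm
        have := (harr _ (mem_union_right _ hpU)).2.2.1
        omega
    · exact hU p hpU x' hx' (mem_union_right _ hmU)
  · rintro i hi ⟨p0, hp0, hp02⟩ c' hmem
    have hb0 := harr _ (mem_union_right _ hp0)
    rcases mem_insert.mp hi with rfl | hiC
    · omega
    · rcases mem_union.mp hmem with hm | hmU
      · rcases mem_union.mp hm with hm | hmim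
        · exact hdiag i hiC ⟨p0, hp0, hp02⟩ c' (mem_union_left _ hm)
        · obtain ⟨r, hr, he⟩ := mem_image.mp hmim
          have hri : r = -i := ((Prod.mk.injEq _ _ _ _).mp he).1
          have hipos : 1 ≤ i := by
            have := hC hiC; simp only [mem_Icc] at this; omega
          have := (hfact r hr).2.2 p0 hp0
          rw [hri, abs_neg, abs_of_pos (by omega)] at this
          exact this hp02
      · exact hdiag i hiC ⟨p0, hp0, hp02⟩ c' (mem_union_right _ hmU)

end glue_valid

-- CHUNK5: glue case (c) validity
section glue_c
variable {m : ℕ} {C : Finset ℤ} {L U : Finset (ℤ × ℤ)}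

lemma glue_c_isATB (h : IsATB m C L U) {S : Finset ℤ} (hS : S ⊆ NN m (C, L, U))
    (hne : S ≠ ∅) :
    IsATB (m+1) (insert ((m:ℤ)+1) C)
      (L ∪ (S.erase (S.min.untopD 0)).image (fun r => (r, (m:ℤ)+1)))
      (insert ((S.min.untopD 0), (m:ℤ)+1) U) := by
  have hC := h.1
  set r1 : ℤ := S.min.untopD 0 with hr1
  obtain ⟨hr1S, hr1min⟩ := min_spec hne
  have hfact : ∀ r ∈ S,
      ((1 ≤ r ∧ r ≤ (m:ℤ) ∧ r ∉ C) ∨ (r < 0 ∧ -r ∈ C ∧ -r ≤ (m:ℤ))) ∧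
        (∀ p ∈ L, p.1 ≠ r) ∧ (∀ p ∈ U, p.2 ≠ |r|) :=
    fun r hr => NN_facts hC (hS hr)
  have harr : ∀ p ∈ L ∪ U, p.2 ∈ C ∧ 1 ≤ p.2 ∧ p.2 ≤ (m : ℤ) ∧ -(m:ℤ) ≤ p.1 ∧ p.1 < p.2 :=
    fun p hp => arrow_facts h hp
  obtain ⟨-, hdisj, h3, hL, hU, hdiag⟩ := h
  -- clause3-style fact for rows of S, as new arrows (r, m+1)
  have hnew : ∀ r ∈ S, ((m:ℤ)+1) ∈ insert ((m:ℤ)+1) C ∧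
      ((1 ≤ r ∧ r ≤ (m:ℤ)+1 ∧ r ∉ insert ((m:ℤ)+1) C ∧ r < (m:ℤ)+1) ∨
        (r < 0 ∧ -r ∈ insert ((m:ℤ)+1) C ∧ -r < (m:ℤ)+1)) := by
    intro r hr
    refine ⟨mem_insert_self _ _, ?_⟩
    rcases (hfact r hr).1 with ⟨a1, a2, a3⟩ | ⟨a1, a2, a3⟩
    · refine Or.inl ⟨a1, by omega, ?_, by omega⟩
      rw [mem_insert]; push_neg
      exact ⟨by omega, a3⟩
    · exact Or.inr ⟨a1, mem_insert_of_mem a2, by omega⟩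
  rw [IsATB, cast_succ]
  refine ⟨?_, ?_, ?_, ?_, ?_, ?_⟩
  · intro c hc
    rcases mem_insert.mp hc with rfl | hc
    · simp only [mem_Icc]; omega
    · have := hC hc; simp only [mem_Icc] at *; omega
  · rw [Finset.disjoint_union_left]
    constructor
    · rw [Finset.disjoint_insert_right]
      refine ⟨fun hmem => ?_, hdisj⟩
      have := (harr _ (mem_union_left _ hmem)).2.2.1; simp only at this; omega
    · rw [Finset.disjoint_left]
      rintro p hp hmem
      obtain ⟨r, hr, rfl⟩ := mem_image.mp hp
      rcases mem_insert.mp hmem with he | hmU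
      · have : r = r1 := ((Prod.mk.injEq _ _ _ _).mp he).1
        exact (Finset.ne_of_mem_erase hr) this
      · have := (harr _ (mem_union_right _ hmU)).2.2.1; simp only at this; omega
  · intro p hp
    rcases mem_union.mp hp with hp | hp2
    · rcases mem_union.mp hp with hpL | hpim
      · obtain ⟨h1, h2⟩ := h3 p (mem_union_left _ hpL)
        have hb := harr p (mem_union_left _ hpL)
        refine ⟨mem_insert_of_mem h1, ?_⟩
        rcases h2 with ⟨a1, a2, a3, a4⟩ | hneg
        · refine Or.inl ⟨a1, by omega, ?_, a4⟩
          rw [mem_insert]; push_neg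
          exact ⟨by omega, a3⟩
        · exact Or.inr ⟨hneg.1, mem_insert_of_mem hneg.2.1, hneg.2.2⟩
      · obtain ⟨r, hr, rfl⟩ := mem_image.mp hpim
        exact hnew r (Finset.mem_of_mem_erase hr)
    · rcases mem_insert.mp hp2 with rfl | hpU
      · exact hnew r1 hr1S
      · obtain ⟨h1, h2⟩ := h3 p (mem_union_right _ hpU)
        have hb := harr p (mem_union_right _ hpU)
        refine ⟨mem_insert_of_mem h1, ?_⟩
        rcases h2 with ⟨a1, a2, a3, a4⟩ | hneg
        · refine Or.inl ⟨a1, by omega, ?_, a4⟩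
          rw [mem_insert]; push_neg
          exact ⟨by omega, a3⟩
        · exact Or.inr ⟨hneg.1, mem_insert_of_mem hneg.2.1, hneg.2.2⟩
  · rintro p hp c' hc' hmem
    rcases mem_union.mp hp with hpL | hpim
    · rcases mem_union.mp hmem with hm | hm2
      · rcases mem_union.mp hm with hm | hmim
        · exact hL p hpL c' hc' (mem_union_left _ hm)
        · obtain ⟨r, hr, he⟩ := mem_image.mp hmim
          obtain ⟨he1, he2⟩ := (Prod.mk.injEq _ _ _ _).mp he
          exact (hfact r (Finset.mem_of_mem_erase hr)).2.1 p hpL he1.symm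
      · rcases mem_insert.mp hm2 with he | hmU
        · obtain ⟨he1, he2⟩ := (Prod.mk.injEq _ _ _ _).mp he
          exact (hfact r1 hr1S).2.1 p hpL he1
        · exact hL p hpL c' hc' (mem_union_right _ hmU)
    · obtain ⟨r, hr, rfl⟩ := mem_image.mp hpim
      simp only at hc'
      rcases mem_union.mp hmem with hm | hm2
      · rcases mem_union.mp hm with hm | hmim
        · have := (harr _ (mem_union_left _ hm)).2.2.1; simp only at this; omega
        · obtain ⟨r', hr', he⟩ := mem_image.mp hmim
          have : ((m:ℤ)+1) = c' := ((Prod.mk.injEq _ _ _ _).mp he).2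
          omega
      · rcases mem_insert.mp hm2 with he | hmU
        · have : ((m:ℤ)+1) = c' := ((Prod.mk.injEq _ _ _ _).mp he).2.symm ▸ rfl
          omega
        · have := (harr _ (mem_union_right _ hmU)).2.2.1; simp only at this; omega
  · rintro p hp x' hx' hmem
    rcases mem_insert.mp hp with rfl | hpU
    · simp only at hx'
      rcases mem_union.mp hmem with hm | hm2
      · rcases mem_union.mp hm with hm | hmim
        · have := (harr _ (mem_union_left _ hm)).2.2.1; simp only at this; omega
        · obtain ⟨r, hr, he⟩ := mem_image.mp hmim
          obtain ⟨he1, he2⟩ := (Prod.mk.injEq _ _ _ _).mp he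
          have := hr1min r (Finset.mem_of_mem_erase hr)
          omega
      · rcases mem_insert.mp hm2 with he | hmU
        · have : x' = r1 := ((Prod.mk.injEq _ _ _ _).mp he).1
          omega
        · have := (harr _ (mem_union_right _ hmU)).2.2.1; simp only at this; omega
    · rcases mem_union.mp hmem with hm | hm2
      · rcases mem_union.mp hm with hm | hmim
        · exact hU p hpU x' hx' (mem_union_left _ hm)
        · obtain ⟨r, hr, he⟩ := mem_image.mp hmim
          have h2 : p.2 = (m:ℤ)+1 := ((Prod.mk.injEq _ _ _ _).mp he).2.symm
          have := (harr _ (mem_union_right _ hpU)).2.2.1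
          omega
      · rcases mem_insert.mp hm2 with he | hmU
        · have h2 := ((Prod.mk.injEq _ _ _ _).mp he).2
          have := (harr _ (mem_union_right _ hpU)).2.2.1
          omega
        · exact hU p hpU x' hx' (mem_union_right _ hmU)
  · rintro i hi ⟨p0, hp0, hp02⟩ c' hmem
    rcases mem_insert.mp hi with rfl | hiC
    · -- i = m+1 : row -(m+1) cannot contain any arrow
      rcases mem_union.mp hmem with hm | hm2
      · rcases mem_union.mp hm with hm | hmim
        · have := (harr _ (mem_union_left _ hm)).2.2.2.1; simp only at this; omega
        · obtain ⟨r, hr, he⟩ := mem_image.mp hmim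
          have he1 : r = -((m:ℤ)+1) := ((Prod.mk.injEq _ _ _ _).mp he).1
          rcases (hfact r (Finset.mem_of_mem_erase hr)).1 with ⟨a1,a2,a3⟩ | ⟨a1,a2,a3⟩ <;> omega
      · rcases mem_insert.mp hm2 with he | hmU
        · have he1 : r1 = -((m:ℤ)+1) := ((Prod.mk.injEq _ _ _ _).mp he).1.symm
          rcases (hfact r1 hr1S).1 with ⟨a1,a2,a3⟩ | ⟨a1,a2,a3⟩ <;> omega
        · have := (harr _ (mem_union_right _ hmU)).2.2.2.1; simp only at this; omega
    · have hib : 1 ≤ i ∧ i ≤ (m:ℤ) := by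
        have := hC hiC; simp only [mem_Icc] at this; exact this
      rcases mem_insert.mp hp0 with rfl | hp0U
      · simp only at hp02; omega
      · rcases mem_union.mp hmem with hm | hm2
        · rcases mem_union.mp hm with hm | hmim
          · exact hdiag i hiC ⟨p0, hp0U, hp02⟩ c' (mem_union_left _ hm)
          · obtain ⟨r, hr, he⟩ := mem_image.mp hmim
            have he1 : r = -i := ((Prod.mk.injEq _ _ _ _).mp he).1
            have := (hfact r (Finset.mem_of_mem_erase hr)).2.2 p0 hp0U
            rw [he1, abs_neg, abs_of_pos (by omega)] at this
            exact this hp02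
        · rcases mem_insert.mp hm2 with he | hmU
          · have he1 : -i = r1 := ((Prod.mk.injEq _ _ _ _).mp he).1.symm ▸ rfl
            have := (hfact r1 hr1S).2.2 p0 hp0U
            rw [← he1, abs_neg, abs_of_pos (by omega)] at this
            exact this hp02
          · exact hdiag i hiC ⟨p0, hp0U, hp02⟩ c' (mem_union_right _ hmU)

end glue_c

-- CHUNK6: split validity
section split_valid
variable {m : ℕ} {C : Finset ℤ} {L U : Finset (ℤ × ℤ)}

lemma erase_isATB (h : IsATB (m+1) C L U) (hmem : ((m:ℤ)+1) ∈ C) :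
    IsATB m (C.erase ((m:ℤ)+1)) (L.filter (fun p => p.2 ≠ (m:ℤ)+1))
      (U.filter (fun p => p.2 ≠ (m:ℤ)+1)) := by
  rw [IsATB, cast_succ] at h
  obtain ⟨hC, hdisj, h3, hL, hU, hdiag⟩ := h
  have hsub : ∀ p, p ∈ (L.filter (fun p => p.2 ≠ (m:ℤ)+1)) ∪
      (U.filter (fun p => p.2 ≠ (m:ℤ)+1)) → p ∈ L ∪ U ∧ p.2 ≠ (m:ℤ)+1 := by
    intro p hp
    rcases mem_union.mp hp with hp | hp <;> rw [mem_filter] at hp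
    · exact ⟨mem_union_left _ hp.1, hp.2⟩
    · exact ⟨mem_union_right _ hp.1, hp.2⟩
  refine ⟨?_, disjoint_filter_filter hdisj, ?_, ?_, ?_, ?_⟩
  · intro c hc
    rw [mem_erase] at hc
    have := hC hc.2; simp only [mem_Icc] at *
    have := hc.1; omega
  · intro p hp
    obtain ⟨hpo, hpne⟩ := hsub p hp
    obtain ⟨h1, h2⟩ := h3 p hpo
    have h2C : p.2 ≤ (m:ℤ) := by
      have := hC h1; simp only [mem_Icc] at this; omega
    refine ⟨mem_erase.mpr ⟨hpne, h1⟩, ?_⟩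
    rcases h2 with ⟨a1, a2, a3, a4⟩ | ⟨a1, a2, a3⟩
    · refine Or.inl ⟨a1, by omega, fun hmem' => a3 (Finset.mem_of_mem_erase hmem'), a4⟩
    · refine Or.inr ⟨a1, mem_erase.mpr ⟨by omega, a2⟩, a3⟩
  · intro p hp c' hc' hmem'
    rw [mem_filter] at hp
    exact hL p hp.1 c' hc' (hsub _ hmem').1
  · intro p hp x' hx' hmem'
    rw [mem_filter] at hp
    exact hU p hp.1 x' hx' (hsub _ hmem').1
  · rintro i hi ⟨p0, hp0, hp02⟩ c' hmem'
    rw [mem_filter] at hp0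
    exact hdiag i (Finset.mem_of_mem_erase hi) ⟨p0, hp0.1, hp02⟩ c' (hsub _ hmem').1

lemma Q_subset_NN (h : IsATB (m+1) C L U) (hmem : ((m:ℤ)+1) ∈ C) :
    (((L ∪ U).filter (fun p => p.2 = (m:ℤ)+1)).image Prod.fst) ⊆
      NN m (C.erase ((m:ℤ)+1), L.filter (fun p => p.2 ≠ (m:ℤ)+1),
        U.filter (fun p => p.2 ≠ (m:ℤ)+1)) := by
  rw [IsATB, cast_succ] at h
  obtain ⟨hC, hdisj, h3, hL, hU, hdiag⟩ := h
  intro r hr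
  obtain ⟨p, hp, hp1⟩ := mem_image.mp hr
  rw [mem_filter] at hp
  obtain ⟨hpo, hp2⟩ := hp
  obtain ⟨h1, h2⟩ := h3 p hpo
  rw [mem_NN]
  refine ⟨?_, ?_, ?_⟩
  · rw [mem_rowsB]
    rcases h2 with ⟨a1, a2, a3, a4⟩ | ⟨a1, a2, a3⟩
    · exact Or.inl ⟨by omega, by omega, fun hc => a3 (Finset.mem_of_mem_erase (hp1 ▸ hc))⟩
    · right
      rw [← hp1]
      exact mem_erase.mpr ⟨by omega, a2⟩
  · -- no left arrow in row r elsewhere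
    have hpp : p = (r, (m:ℤ)+1) := Prod.ext hp1 hp2
    intro q hq hq1
    rw [mem_filter] at hq
    have hq2 : q.2 < (m:ℤ)+1 := by
      have := hC (h3 q (mem_union_left _ hq.1)).1
      simp only [mem_Icc] at this
      have := hq.2; omega
    refine hL q hq.1 ((m:ℤ)+1) (by omega) ?_
    rw [hq1]
    rw [hpp] at hpo
    exact hpo
  · -- no up arrow in column |r|
    have hpp : p = (r, (m:ℤ)+1) := Prod.ext hp1 hp2
    intro q hq hq2
    rw [mem_filter] at hq
    rcases h2 with ⟨a1, a2, a3, a4⟩ | ⟨a1, a2, a3⟩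
    · -- r positive : |r| = r ∉ C, but q.2 ∈ C
      have hrpos : 0 < r := by omega
      rw [abs_of_pos hrpos] at hq2
      have a3' : r ∉ C := by rw [← hp1]; exact a3
      have q2C : q.2 ∈ C := (h3 q (mem_union_right _ hq.1)).1
      rw [hq2] at q2C
      exact a3' q2C
    · -- r negative : column -r has an up arrow, contradicting hdiag
      have hrneg : r < 0 := by omega
      rw [abs_of_neg hrneg] at hq2
      have a2' : -r ∈ C := by rw [← hp1]; exact a2
      refine hdiag (-r) a2' ⟨q, hq.1, hq2⟩ ((m:ℤ)+1) ?_
      have hee : (- -r, (m:ℤ)+1) = p := by rw [neg_neg, hpp]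
      rw [hee]
      exact hpo
end split_valid

-- CHUNK7: round trips
section roundtrip
variable {m : ℕ} {C : Finset ℤ} {L U : Finset (ℤ × ℤ)}

lemma shrink_isATB (h : IsATB (m+1) C L U) (hn : ((m:ℤ)+1) ∉ C) : IsATB m C L U := by
  rw [IsATB, cast_succ] at h
  obtain ⟨hC, hdisj, h3, hL, hU, hdiag⟩ := h
  refine ⟨?_, hdisj, ?_, hL, hU, hdiag⟩
  · intro c hc
    have := hC hc; simp only [mem_Icc] at *
    have : c ≠ (m:ℤ)+1 := fun he => hn (he ▸ hc)
    omega
  · intro p hp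
    obtain ⟨h1, h2⟩ := h3 p hp
    have hp2 : p.2 ≤ (m:ℤ) := by
      have := hC h1; simp only [mem_Icc] at this
      have : p.2 ≠ (m:ℤ)+1 := fun he => hn (he ▸ h1)
      omega
    refine ⟨h1, ?_⟩
    rcases h2 with ⟨a1, a2, a3, a4⟩ | hneg
    · exact Or.inl ⟨a1, by omega, a3, a4⟩
    · exact Or.inr hneg

lemma pair_image {P : Finset (ℤ × ℤ)} {n : ℤ} (h : ∀ p ∈ P, p.2 = n) :
    (P.image Prod.fst).image (fun r => (r, n)) = P := by
  ext ⟨a, b⟩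
  simp only [mem_image, Prod.mk.injEq]
  constructor
  · rintro ⟨r, ⟨p, hp, hp1⟩, rfl, rfl⟩
    have hpe : p = (r, n) := Prod.ext hp1 (h p hp)
    rwa [← hpe]
  · rintro hab
    exact ⟨a, ⟨(a, b), hab, rfl⟩, rfl, (h _ hab).symm⟩

lemma image_fst_pair (S : Finset ℤ) (c : ℤ) :
    (S.image (fun r => (r, c))).image Prod.fst = S := by
  ext a
  simp only [mem_image]
  constructor
  · rintro ⟨p, ⟨r, hr, rfl⟩, rfl⟩; exact hr
  · intro ha; exact ⟨(a, c), ⟨a, ha, rfl⟩, rfl⟩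

lemma glue_splitT {T : Tab} (hT : T ∈ ATB (m+1)) :
    glue m (splitT m T).1 (splitT m T).2 = T := by
  obtain ⟨C, L, U⟩ := T
  have h := mem_ATB.mp hT
  by_cases hmem : ((m:ℤ)+1) ∈ C
  · rw [splitT, if_pos hmem]
    rw [IsATB, cast_succ] at h
    obtain ⟨hC, hdisj, h3, hL, hU, hdiag⟩ := h
    simp only
    have hfe : ∀ p ∈ (L ∪ U).filter (fun p => p.2 = (m:ℤ)+1), p.2 = (m:ℤ)+1 :=
      fun p hp => (mem_filter.mp hp).2
    by_cases hup : ∃ p ∈ U, p.2 = (m:ℤ)+1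
    · rw [if_pos hup]
      obtain ⟨p0, hp0, hp02⟩ := hup
      -- the up arrow is the minimum of Q
      set Q := ((L ∪ U).filter (fun p => p.2 = (m:ℤ)+1)).image Prod.fst with hQ
      have hp0Q : p0.1 ∈ Q := mem_image.mpr ⟨p0, mem_filter.mpr ⟨mem_union_right _ hp0, hp02⟩, rfl⟩
      have hlb : ∀ r ∈ Q, p0.1 ≤ r := by
        intro r hr
        by_contra hlt
        push_neg at hlt
        obtain ⟨p, hp, hp1⟩ := mem_image.mp hr
        rw [mem_filter] at hp
        have hpe : p = (r, (m:ℤ)+1) := Prod.ext hp1 hp.2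
        refine hU p0 hp0 r hlt ?_
        rw [hp02, ← hpe]
        exact hp.1
      have hQne : Q ≠ ∅ := ne_empty_of_mem hp0Q
      have hmin : Q.min.untopD 0 = p0.1 := by
        obtain ⟨h1, h2⟩ := min_spec hQne
        exact le_antisymm (h2 _ hp0Q) (hlb _ h1)
      -- uniqueness of the up arrow in column m+1
      have huniq : ∀ q ∈ U, q.2 = (m:ℤ)+1 → q = p0 := by
        intro q hq hq2
        have hm1 : (q.1, p0.2) ∈ L ∪ U := by
          rw [hp02, ← hq2, Prod.mk.eta]; exact mem_union_right _ hq
        have hm2 : (p0.1, q.2) ∈ L ∪ U := by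
          rw [hq2, ← hp02, Prod.mk.eta]; exact mem_union_right _ hp0
        have h1 : ¬ q.1 < p0.1 := fun hlt => hU p0 hp0 q.1 hlt hm1
        have h2 : ¬ p0.1 < q.1 := fun hlt => hU q hq p0.1 hlt hm2
        have he1 : q.1 = p0.1 := by omega
        calc q = (q.1, q.2) := (Prod.mk.eta).symm
        _ = (p0.1, p0.2) := by rw [he1, hq2, hp02]
        _ = p0 := Prod.mk.eta
      rw [glue]
      simp only [hmin]
      refine Prod.ext ?_ (Prod.ext ?_ ?_) <;> simp only
      · exact insert_erase hmem
      · -- left arrows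
        have hQe : Q.erase p0.1 = (L.filter (fun p => p.2 = (m:ℤ)+1)).image Prod.fst := by
          ext r
          simp only [mem_erase, mem_image, hQ]
          constructor
          · rintro ⟨hne, p, hp, hp1⟩
            rw [mem_filter] at hp
            rcases mem_union.mp hp.1 with hpL | hpU
            · exact ⟨p, mem_filter.mpr ⟨hpL, hp.2⟩, hp1⟩
            · exfalso
              have heq := huniq p hpU hp.2
              rw [heq] at hp1
              exact hne hp1.symm
          · rintro ⟨p, hpf, hp1⟩
            rw [mem_filter] at hpf
            obtain ⟨hp, hp2⟩ := hpf
            refine ⟨?_, p, mem_filter.mpr ⟨mem_union_left _ hp, hp2⟩, hp1⟩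
            intro hre
            have hpe2 : p = p0 := by
              calc p = (p.1, p.2) := (Prod.mk.eta).symm
              _ = (p0.1, p0.2) := by rw [hp1, hre, hp2, hp02]
              _ = p0 := Prod.mk.eta
            exact (Finset.disjoint_left.mp hdisj (hpe2 ▸ hp)) (hpe2 ▸ hp0)
          
        rw [hQe, pair_image (fun p hp => (mem_filter.mp hp).2)]
        rw [union_comm]
        exact filter_union_filter_not_eq _ L
      · -- up arrows
        have hp0e : (p0.1, (m:ℤ)+1) = p0 := by
          rw [← hp02, Prod.mk.eta]
        rw [hp0e]
        have : U.filter (fun p => ¬ p.2 ≠ (m:ℤ)+1) = {p0} := by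
          ext q
          simp only [mem_filter, mem_singleton, not_not]
          constructor
          · rintro ⟨hq, hq2⟩; exact huniq q hq hq2
          · rintro rfl; exact ⟨hp0, hp02⟩
        calc insert p0 (U.filter (fun p => p.2 ≠ (m:ℤ)+1))
            = U.filter (fun p => ¬ p.2 ≠ (m:ℤ)+1) ∪ U.filter (fun p => p.2 ≠ (m:ℤ)+1) := by
              rw [this, insert_eq]
        _ = U := by rw [union_comm]; exact filter_union_filter_not_eq _ U
    · rw [if_neg hup]
      rw [glue]
      refine Prod.ext ?_ (Prod.ext ?_ ?_) <;> simp only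
      · exact insert_erase hmem
      · have hfilt : (L ∪ U).filter (fun p => p.2 = (m:ℤ)+1)
            = L.filter (fun p => p.2 = (m:ℤ)+1) := by
          rw [filter_union]
          have : U.filter (fun p => p.2 = (m:ℤ)+1) = ∅ := by
            rw [filter_eq_empty_iff]
            exact fun p hp hp2 => hup ⟨p, hp, hp2⟩
          rw [this, union_empty]
        rw [hfilt, pair_image (fun p hp => (mem_filter.mp hp).2)]
        rw [union_comm]
        exact filter_union_filter_not_eq _ L
      · rw [filter_eq_self]
        exact fun p hp hp2 => hup ⟨p, hp, hp2⟩
  · rw [splitT, if_neg hmem, glue]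

lemma splitT_glue {T : Tab} {d : Option (Finset ℤ × Bool)} (hT : T ∈ ATB m)
    (hd : d ∈ fiberOptions m T) : splitT m (glue m T d) = ⟨T, d⟩ := by
  obtain ⟨C, L, U⟩ := T
  have h := mem_ATB.mp hT
  have hC := h.1
  have hnotC : ((m:ℤ)+1) ∉ C := by
    intro hmem
    have := hC hmem; simp only [mem_Icc] at this; omega
  have harrL : ∀ p ∈ L, p.2 ≠ (m:ℤ)+1 := by
    intro p hp
    have := (arrow_facts h (mem_union_left _ hp)).2.2.1; omega
  have harrU : ∀ p ∈ U, p.2 ≠ (m:ℤ)+1 := by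
    intro p hp
    have := (arrow_facts h (mem_union_right _ hp)).2.2.1; omega
  rcases mem_fiberOptions.mp hd with rfl | ⟨S, hS, (rfl | ⟨rfl, hne⟩)⟩
  · rw [glue, splitT, if_neg hnotC]
  · rw [glue, splitT]
    simp only
    rw [if_pos (mem_insert_self _ _)]
    have himg : ∀ p ∈ S.image (fun r => (r, (m:ℤ)+1)), p.2 = (m:ℤ)+1 := by
      intro p hp
      obtain ⟨r, hr, rfl⟩ := mem_image.mp hp
      rfl
    have e1 : (insert ((m:ℤ)+1) C).erase ((m:ℤ)+1) = C := erase_insert hnotC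
    have e2 : (L ∪ S.image (fun r => (r, (m:ℤ)+1))).filter (fun p => p.2 ≠ (m:ℤ)+1) = L := by
      rw [filter_union]
      rw [filter_eq_self.mpr harrL]
      have : (S.image (fun r => (r, (m:ℤ)+1))).filter (fun p => p.2 ≠ (m:ℤ)+1) = ∅ := by
        rw [filter_eq_empty_iff]
        exact fun p hp hp2 => hp2 (himg p hp)
      rw [this, union_empty]
    have e3 : U.filter (fun p => p.2 ≠ (m:ℤ)+1) = U := filter_eq_self.mpr harrU
    have e4 : ((L ∪ S.image (fun r => (r, (m:ℤ)+1)) ∪ U).filter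
        (fun p => p.2 = (m:ℤ)+1)).image Prod.fst = S := by
      rw [union_right_comm, filter_union]
      have hLU : (L ∪ U).filter (fun p => p.2 = (m:ℤ)+1) = ∅ := by
        rw [filter_eq_empty_iff]
        rintro p hp hp2
        rcases mem_union.mp hp with hp | hp
        · exact harrL p hp hp2
        · exact harrU p hp hp2
      rw [hLU, empty_union, filter_eq_self.mpr himg]
      exact image_fst_pair _ _
    have e5 : ¬ ∃ p ∈ U, p.2 = (m:ℤ)+1 := by
      rintro ⟨p, hp, hp2⟩; exact harrU p hp hp2
    rw [e1, e2, e3, e4, if_neg e5]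
  · rw [glue, splitT]
    simp only
    rw [if_pos (mem_insert_self _ _)]
    set r1 := S.min.untopD 0 with hr1
    obtain ⟨hr1S, hr1min⟩ := min_spec hne
    have himg : ∀ p ∈ (S.erase r1).image (fun r => (r, (m:ℤ)+1)), p.2 = (m:ℤ)+1 := by
      intro p hp
      obtain ⟨r, hr, rfl⟩ := mem_image.mp hp
      rfl
    have e1 : (insert ((m:ℤ)+1) C).erase ((m:ℤ)+1) = C := erase_insert hnotC
    have e2 : (L ∪ (S.erase r1).image (fun r => (r, (m:ℤ)+1))).filter
        (fun p => p.2 ≠ (m:ℤ)+1) = L := by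
      rw [filter_union, filter_eq_self.mpr harrL]
      have : ((S.erase r1).image (fun r => (r, (m:ℤ)+1))).filter
          (fun p => p.2 ≠ (m:ℤ)+1) = ∅ := by
        rw [filter_eq_empty_iff]
        exact fun p hp hp2 => hp2 (himg p hp)
      rw [this, union_empty]
    have e3 : (insert (r1, (m:ℤ)+1) U).filter (fun p => p.2 ≠ (m:ℤ)+1) = U := by
      rw [filter_insert, if_neg (by simp), filter_eq_self.mpr harrU]
    have e4 : ((L ∪ (S.erase r1).image (fun r => (r, (m:ℤ)+1)) ∪
        insert (r1, (m:ℤ)+1) U).filter (fun p => p.2 = (m:ℤ)+1)).image Prod.fst = S := by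
      rw [filter_union, filter_union, filter_insert, if_pos rfl]
      have hLe : L.filter (fun p => p.2 = (m:ℤ)+1) = ∅ := by
        rw [filter_eq_empty_iff]; exact fun p hp hp2 => harrL p hp hp2
      have hUe : U.filter (fun p => p.2 = (m:ℤ)+1) = ∅ := by
        rw [filter_eq_empty_iff]; exact fun p hp hp2 => harrU p hp hp2
      rw [hLe, hUe, empty_union, filter_eq_self.mpr himg]
      rw [image_union, image_fst_pair, image_insert, image_empty]
      simp only
      rw [insert_eq, union_comm, ← insert_eq]
      exact insert_erase hr1S
    have e5 : ∃ p ∈ insert (r1, (m:ℤ)+1) U, p.2 = (m:ℤ)+1 :=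
      ⟨(r1, (m:ℤ)+1), mem_insert_self _ _, rfl⟩
    rw [e1, e2, e3, e4, if_pos e5]

end roundtrip

-- CHUNK8: row and urr computations
section weights
variable {m : ℕ} {C : Finset ℤ} {L U : Finset (ℤ × ℤ)}

lemma rowsB_succ_notmem (hC : C ⊆ Finset.Icc 1 (m:ℤ)) :
    rowsB (m+1) C = insert ((m:ℤ)+1) (rowsB m C) := by
  ext r
  rw [mem_insert, mem_rowsB, mem_rowsB]
  constructor
  · rintro (⟨h1, h2, h3⟩ | h)
    · by_cases he : r = (m:ℤ)+1
      · exact Or.inl he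
      · push_cast at h2
        exact Or.inr (Or.inl ⟨h1, by omega, h3⟩)
    · exact Or.inr (Or.inr h)
  · rintro (rfl | (⟨h1, h2, h3⟩ | h))
    · refine Or.inl ⟨by omega, by push_cast; omega, fun hc => ?_⟩
      have := hC hc; simp only [mem_Icc] at this; omega
    · exact Or.inl ⟨h1, by push_cast; omega, h3⟩
    · exact Or.inr h

lemma rowsB_succ_mem (hC : C ⊆ Finset.Icc 1 (m:ℤ)) :
    rowsB (m+1) (insert ((m:ℤ)+1) C) = insert (-((m:ℤ)+1)) (rowsB m C) := by
  ext r
  rw [mem_insert, mem_rowsB, mem_rowsB]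
  constructor
  · rintro (⟨h1, h2, h3⟩ | h)
    · rw [mem_insert] at h3
      push_neg at h3
      push_cast at h2
      exact Or.inr (Or.inl ⟨h1, by omega, h3.2⟩)
    · rcases mem_insert.mp h with he | h
      · exact Or.inl (by omega)
      · exact Or.inr (Or.inr h)
  · rintro (rfl | (⟨h1, h2, h3⟩ | h))
    · exact Or.inr (mem_insert_self _ _)
    · refine Or.inl ⟨h1, by push_cast; omega, ?_⟩
      rw [mem_insert]; push_neg
      exact ⟨by omega, h3⟩
    · exact Or.inr (mem_insert_of_mem h)

lemma notmem_rowsB_pos (hC : C ⊆ Finset.Icc 1 (m:ℤ)) : ((m:ℤ)+1) ∉ rowsB m C := by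
  intro hmem
  exact (row_facts hC hmem).1 rfl

lemma notmem_rowsB_neg (hC : C ⊆ Finset.Icc 1 (m:ℤ)) : (-((m:ℤ)+1)) ∉ rowsB m C := by
  intro hmem
  exact (row_facts hC hmem).2.1 rfl

lemma NN_glue_none (h : IsATB m C L U) :
    NN (m+1) (C, L, U) = insert ((m:ℤ)+1) (NN m (C, L, U)) := by
  ext r
  rw [mem_insert, mem_NN, mem_NN]
  simp only
  rw [rowsB_succ_notmem h.1, mem_insert]
  constructor
  · rintro ⟨(rfl | hrow), h1, h2⟩
    · exact Or.inl rfl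
    · exact Or.inr ⟨hrow, h1, h2⟩
  · rintro (rfl | ⟨hrow, h1, h2⟩)
    · refine ⟨Or.inl rfl, ?_, ?_⟩
      · intro p hp
        have h5 := (arrow_facts h (mem_union_left _ hp)).2.2.1
        have h6 := (arrow_facts h (mem_union_left _ hp)).2.2.2.2
        omega
      · intro p hp
        have := (arrow_facts h (mem_union_right _ hp)).2.2.1
        rw [abs_of_pos (by omega : (0:ℤ) < (m:ℤ)+1)]
        omega
    · exact ⟨Or.inr hrow, h1, h2⟩

lemma urr_glue_none (h : IsATB m C L U) :
    urrB (m+1) C L U = urrB m C L U + 1 := by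
  have h1 : urrB (m+1) C L U = (NN (m+1) ((C, L, U) : Tab)).card := rfl
  have h2 : urrB m C L U = (NN m ((C, L, U) : Tab)).card := rfl
  rw [h1, h2, NN_glue_none h, card_insert_of_notMem
    (fun hmem => notmem_rowsB_pos h.1 (NN_subset_rowsB hmem))]

lemma NN_glue_b (h : IsATB m C L U) {S : Finset ℤ} (hS : S ⊆ NN m (C, L, U)) :
    NN (m+1) ((insert ((m:ℤ)+1) C, L ∪ S.image (fun r => (r, (m:ℤ)+1)), U) : Tab)
      = insert (-((m:ℤ)+1)) (NN m (C, L, U) \ S) := by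
  ext r
  rw [mem_insert, mem_sdiff, mem_NN, mem_NN]
  simp only
  rw [rowsB_succ_mem h.1, mem_insert]
  constructor
  · rintro ⟨(rfl | hrow), h1, h2⟩
    · exact Or.inl rfl
    · refine Or.inr ⟨⟨hrow, fun p hp => h1 p (mem_union_left _ hp), h2⟩, ?_⟩
      intro hrS
      exact h1 (r, (m:ℤ)+1) (mem_union_right _ (mem_image.mpr ⟨r, hrS, rfl⟩)) rfl
  · rintro (rfl | ⟨⟨hrow, h1, h2⟩, hrS⟩)
    · refine ⟨Or.inl rfl, ?_, ?_⟩
      · intro p hp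
        rcases mem_union.mp hp with hp | hp
        · have h5 := (arrow_facts h (mem_union_left _ hp)).2.2.2.1
          omega
        · obtain ⟨s, hs, rfl⟩ := mem_image.mp hp
          simp only
          exact (row_facts h.1 (NN_subset_rowsB (hS hs))).2.1
      · intro p hp
        have := (arrow_facts h (mem_union_right _ hp)).2.2.1
        rw [abs_neg, abs_of_pos (by omega : (0:ℤ) < (m:ℤ)+1)]
        omega
    · refine ⟨Or.inr hrow, ?_, h2⟩
      intro p hp
      rcases mem_union.mp hp with hp | hp
      · exact h1 p hp
      · obtain ⟨s, hs, rfl⟩ := mem_image.mp hp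
        simp only
        exact fun he => hrS (he ▸ hs)

lemma urr_glue_b (h : IsATB m C L U) {S : Finset ℤ} (hS : S ⊆ NN m (C, L, U)) :
    urrB (m+1) (insert ((m:ℤ)+1) C) (L ∪ S.image (fun r => (r, (m:ℤ)+1))) U
      = urrB m C L U - S.card + 1 ∧ S.card ≤ urrB m C L U := by
  have h2 : urrB m C L U = (NN m ((C, L, U) : Tab)).card := rfl
  have hle : S.card ≤ urrB m C L U := h2 ▸ card_le_card hS
  refine ⟨?_, hle⟩
  have h1 : urrB (m+1) (insert ((m:ℤ)+1) C) (L ∪ S.image (fun r => (r, (m:ℤ)+1))) U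
      = (NN (m+1) ((insert ((m:ℤ)+1) C, L ∪ S.image (fun r => (r, (m:ℤ)+1)), U) : Tab)).card := rfl
  rw [h1, h2, NN_glue_b h hS, card_insert_of_notMem, card_sdiff_of_subset hS]
  intro hmem
  exact notmem_rowsB_neg h.1 (NN_subset_rowsB (mem_sdiff.mp hmem).1)

lemma NN_glue_c (h : IsATB m C L U) {S : Finset ℤ} (hS : S ⊆ NN m (C, L, U))
    (hne : S ≠ ∅) :
    NN (m+1) ((insert ((m:ℤ)+1) C,
        L ∪ (S.erase (S.min.untopD 0)).image (fun r => (r, (m:ℤ)+1)),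
        insert ((S.min.untopD 0), (m:ℤ)+1) U) : Tab)
      = NN m (C, L, U) \ (S.erase (S.min.untopD 0)) := by
  set r1 := S.min.untopD 0 with hr1
  ext r
  rw [mem_sdiff, mem_NN, mem_NN]
  simp only
  rw [rowsB_succ_mem h.1, mem_insert]
  constructor
  · rintro ⟨(rfl | hrow), h1, h2⟩
    · exfalso
      refine h2 (r1, (m:ℤ)+1) (mem_insert_self _ _) ?_
      simp only
      rw [abs_neg, abs_of_pos (by omega : (0:ℤ) < (m:ℤ)+1)]
    · refine ⟨⟨hrow, fun p hp => h1 p (mem_union_left _ hp),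
        fun p hp => h2 p (mem_insert_of_mem hp)⟩, ?_⟩
      intro hrS
      exact h1 (r, (m:ℤ)+1) (mem_union_right _ (mem_image.mpr ⟨r, hrS, rfl⟩)) rfl
  · rintro ⟨⟨hrow, h1, h2⟩, hrS⟩
    refine ⟨Or.inr hrow, ?_, ?_⟩
    · intro p hp
      rcases mem_union.mp hp with hp | hp
      · exact h1 p hp
      · obtain ⟨s, hs, rfl⟩ := mem_image.mp hp
        simp only
        exact fun he => hrS (he ▸ hs)
    · intro p hp
      rcases mem_insert.mp hp with rfl | hp
      · simp only
        have := (row_facts h.1 hrow).2.2.1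
        omega
      · exact h2 p hp

lemma urr_glue_c (h : IsATB m C L U) {S : Finset ℤ} (hS : S ⊆ NN m (C, L, U))
    (hne : S ≠ ∅) :
    urrB (m+1) (insert ((m:ℤ)+1) C)
        (L ∪ (S.erase (S.min.untopD 0)).image (fun r => (r, (m:ℤ)+1)))
        (insert ((S.min.untopD 0), (m:ℤ)+1) U)
      = urrB m C L U - S.card + 1 ∧ S.card ≤ urrB m C L U := by
  have h2 : urrB m C L U = (NN m ((C, L, U) : Tab)).card := rfl
  have hle : S.card ≤ urrB m C L U := h2 ▸ card_le_card hS
  refine ⟨?_, hle⟩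
  obtain ⟨hr1S, -⟩ := min_spec hne
  have h1 : urrB (m+1) (insert ((m:ℤ)+1) C)
      (L ∪ (S.erase (S.min.untopD 0)).image (fun r => (r, (m:ℤ)+1)))
      (insert ((S.min.untopD 0), (m:ℤ)+1) U)
      = (NN (m+1) ((insert ((m:ℤ)+1) C,
          L ∪ (S.erase (S.min.untopD 0)).image (fun r => (r, (m:ℤ)+1)),
          insert ((S.min.untopD 0), (m:ℤ)+1) U) : Tab)).card := rfl
  rw [h1, h2, NN_glue_c h hS hne, card_sdiff_of_subset (subset_trans (erase_subset _ _) hS),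
    card_erase_of_mem hr1S]
  have hSpos : 1 ≤ S.card := card_pos.mpr (nonempty_iff_ne_empty.mpr hne)
  have := card_le_card hS
  omega

end weights

-- CHUNK9: base case n = 1
lemma ATB_one : ATB 1 = {((∅ : Finset ℤ), (∅ : Finset (ℤ × ℤ)), (∅ : Finset (ℤ × ℤ))),
    (({1} : Finset ℤ), (∅ : Finset (ℤ × ℤ)), (∅ : Finset (ℤ × ℤ)))} := by
  ext T
  obtain ⟨C, L, U⟩ := T
  rw [mem_ATB]
  simp only [mem_insert, mem_singleton, Prod.mk.injEq]
  constructor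
  · intro h
    have hC := h.1
    have hLU : ∀ p : ℤ × ℤ, p ∈ L ∪ U → False := by
      intro p hp
      obtain ⟨hc, h1, h2, h3, h4⟩ := arrow_facts h hp
      rcases (h.2.2.1 p hp).2 with ⟨a1, a2, a3, a4⟩ | ⟨a1, a2, a3⟩
      · push_cast at h2; omega
      · have := hC a2; simp only [mem_Icc] at this; push_cast at this h2; omega
    have hL : L = ∅ := eq_empty_iff_forall_notMem.mpr
      (fun p hp => hLU p (mem_union_left _ hp))
    have hU : U = ∅ := eq_empty_iff_forall_notMem.mpr
      (fun p hp => hLU p (mem_union_right _ hp))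
    have hCs : C ⊆ {1} := by
      intro c hc
      have := hC hc; simp only [mem_Icc] at this; push_cast at this
      rw [mem_singleton]; omega
    rcases Finset.subset_singleton_iff.mp hCs with rfl | rfl
    · exact Or.inl ⟨rfl, hL, hU⟩
    · exact Or.inr ⟨rfl, hL, hU⟩
  · have hIcc : ({1} : Finset ℤ) ⊆ Finset.Icc 1 ((1:ℕ):ℤ) := by
      intro c hc
      rw [mem_singleton] at hc
      simp only [mem_Icc]
      push_cast
      omega
    rintro (⟨rfl, rfl, rfl⟩ | ⟨rfl, rfl, rfl⟩)
    · exact ⟨empty_subset _, disjoint_empty_left _,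
        fun p hp => absurd hp (by simp), fun p hp => absurd hp (by simp),
        fun p hp => absurd hp (by simp), fun i hi => absurd hi (by simp)⟩
    · refine ⟨hIcc, disjoint_empty_left _,
        fun p hp => absurd hp (by simp), fun p hp => absurd hp (by simp),
        fun p hp => absurd hp (by simp), fun i hi h2 => absurd h2 (by simp)⟩

lemma urrB_one_empty : urrB 1 (∅ : Finset ℤ) ∅ ∅ = 1 := by
  unfold urrB rowsB
  rw [filter_true_of_mem (by intro x hx; exact ⟨fun p hp => absurd hp (by simp),
    fun p hp => absurd hp (by simp)⟩)]
  simp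

lemma urrB_one_single : urrB 1 ({1} : Finset ℤ) ∅ ∅ = 1 := by
  unfold urrB rowsB
  rw [filter_true_of_mem (by intro x hx; exact ⟨fun p hp => absurd hp (by simp),
    fun p hp => absurd hp (by simp)⟩)]
  rw [card_union_of_disjoint]
  · norm_num
  · simp

-- CHUNK10: the fiber sum
lemma sum_pow_powerset (N : Finset ℤ) (x : ℤ) :
    ∑ S ∈ N.powerset, x ^ (N.card - S.card) = (x + 1) ^ N.card := by
  calc ∑ S ∈ N.powerset, x ^ (N.card - S.card)
      = ∑ S ∈ N.powerset, (∏ _i ∈ S, (1:ℤ)) * ∏ _i ∈ N \ S, x := by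
        refine sum_congr rfl (fun S hS => ?_)
        rw [prod_const_one, one_mul, prod_const, card_sdiff_of_subset (mem_powerset.mp hS)]
    _ = ∏ _i ∈ N, ((1:ℤ) + x) := (prod_add _ _ _).symm
    _ = (x + 1) ^ N.card := by rw [prod_const, add_comm]

lemma sum_fiberOptions {m : ℕ} (T : Tab) (x : ℤ) :
    ∑ d ∈ fiberOptions m T, x ^ (urrB m T.1 T.2.1 T.2.2 - dsize d)
      = 2 * (x + 1) ^ urrB m T.1 T.2.1 T.2.2 := by
  have hu : urrB m T.1 T.2.1 T.2.2 = (NN m T).card := rfl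
  rw [hu]
  set N := NN m T with hN
  set u := N.card with hucard
  rw [fiberOptions]
  rw [Finset.sum_insert (by simp)]
  rw [Finset.sum_union (by
    rw [Finset.disjoint_left]
    rintro d hd1 hd2
    obtain ⟨S, hS, rfl⟩ := mem_image.mp hd1
    obtain ⟨S', hS', he⟩ := mem_image.mp hd2
    simp at he)]
  rw [Finset.sum_image (by intro a _ b _ h; simpa using h),
    Finset.sum_image (by intro a _ b _ h; simpa using h)]
  have e0 : dsize (none : Option (Finset ℤ × Bool)) = 0 := rfl
  have e1 : ∀ S : Finset ℤ, dsize (some (S, false)) = S.card := fun _ => rfl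
  have e2 : ∀ S : Finset ℤ, dsize (some (S, true)) = S.card := fun _ => rfl
  simp only [e0, e1, e2, Nat.sub_zero]
  rw [filter_ne', sum_erase_eq_sub (mem_powerset.mpr (empty_subset _))]
  rw [sum_pow_powerset]
  simp only [card_empty, Nat.sub_zero]
  ring

-- CHUNK10b: packaged glue/split specs
lemma glue_mem {m : ℕ} {T : Tab} {d : Option (Finset ℤ × Bool)} (hT : T ∈ ATB m)
    (hd : d ∈ fiberOptions m T) : glue m T d ∈ ATB (m+1) := by
  have h : IsATB m T.1 T.2.1 T.2.2 := mem_ATB.mp hT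
  rcases mem_fiberOptions.mp hd with rfl | ⟨S, hS, (rfl | ⟨rfl, hne⟩)⟩
  · rw [glue]
    exact mem_ATB.mpr (glue_a_isATB h)
  · exact mem_ATB.mpr (glue_b_isATB h hS)
  · exact mem_ATB.mpr (glue_c_isATB h hS hne)

lemma glue_urr {m : ℕ} {T : Tab} {d : Option (Finset ℤ × Bool)} (hT : T ∈ ATB m)
    (hd : d ∈ fiberOptions m T) :
    urrB (m+1) (glue m T d).1 (glue m T d).2.1 (glue m T d).2.2
        = urrB m T.1 T.2.1 T.2.2 + 1 - dsize d
      ∧ dsize d ≤ urrB m T.1 T.2.1 T.2.2 := by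
  have h : IsATB m T.1 T.2.1 T.2.2 := mem_ATB.mp hT
  rcases mem_fiberOptions.mp hd with rfl | ⟨S, hS, (rfl | ⟨rfl, hne⟩)⟩
  · rw [glue]
    exact ⟨urr_glue_none h, Nat.zero_le _⟩
  · obtain ⟨he, hle⟩ := urr_glue_b h hS
    rw [glue]
    refine ⟨?_, hle⟩
    rw [he]
    have : dsize (some (S, false)) = S.card := rfl
    rw [this]
    omega
  · obtain ⟨he, hle⟩ := urr_glue_c h hS hne
    rw [glue]
    refine ⟨?_, hle⟩
    rw [he]
    have : dsize (some (S, true)) = S.card := rfl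
    rw [this]
    omega

lemma splitT_spec {m : ℕ} {T : Tab} (hT : T ∈ ATB (m+1)) :
    (splitT m T).1 ∈ ATB m ∧ (splitT m T).2 ∈ fiberOptions m (splitT m T).1 := by
  have h : IsATB (m+1) T.1 T.2.1 T.2.2 := mem_ATB.mp hT
  by_cases hmem : ((m:ℤ)+1) ∈ T.1
  · rw [splitT, if_pos hmem]
    constructor
    · exact mem_ATB.mpr (erase_isATB h hmem)
    · rw [mem_fiberOptions]
      by_cases hup : ∃ p ∈ T.2.2, p.2 = (m:ℤ)+1
      · rw [if_pos hup]
        refine Or.inr ⟨_, Q_subset_NN h hmem, Or.inr ⟨rfl, ?_⟩⟩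
        obtain ⟨p, hp, hp2⟩ := hup
        exact ne_empty_of_mem (mem_image.mpr
          ⟨p, mem_filter.mpr ⟨mem_union_right _ hp, hp2⟩, rfl⟩)
      · rw [if_neg hup]
        exact Or.inr ⟨_, Q_subset_NN h hmem, Or.inl rfl⟩
  · rw [splitT, if_neg hmem]
    exact ⟨mem_ATB.mpr (shrink_isATB h hmem), mem_insert_self _ _⟩

lemma urr_pos : ∀ m : ℕ, 1 ≤ m → ∀ T ∈ ATB m, 1 ≤ urrB m T.1 T.2.1 T.2.2 := by
  intro m
  induction m with
  | zero => omega
  | succ k ih =>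
    intro _ T hT
    rcases Nat.eq_zero_or_pos k with rfl | hk
    · rw [ATB_one] at hT
      rcases mem_insert.mp hT with rfl | hT
      · rw [urrB_one_empty]
      · rw [mem_singleton.mp hT, urrB_one_single]
    · obtain ⟨hT', hd⟩ := splitT_spec hT
      obtain ⟨he, hle⟩ := glue_urr hT' hd
      rw [glue_splitT hT] at he
      omega

-- CHUNK11: main theorem
lemma main_sum : ∀ n : ℕ, 1 ≤ n → ∀ x : ℤ,
    ∑ T ∈ ATB n, x ^ (urrB n T.1 T.2.1 T.2.2 - 1) =
      2 ^ n * (ascPochhammer ℤ (n - 1)).eval (x + 1) := by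
  refine Nat.le_induction ?_ ?_
  · intro x
    rw [ATB_one, Finset.sum_pair (by simp [Finset.ext_iff])]
    simp only [urrB_one_empty, urrB_one_single]
    norm_num [ascPochhammer_zero]
  · intro m hm ih x
    have key : ∑ T ∈ ATB (m+1), x ^ (urrB (m+1) T.1 T.2.1 T.2.2 - 1)
        = ∑ p ∈ (ATB m).sigma (fun T => fiberOptions m T),
            x ^ (urrB m p.1.1 p.1.2.1 p.1.2.2 - dsize p.2) := by
      refine Finset.sum_nbij' (fun T => splitT m T) (fun p => glue m p.1 p.2)
        ?_ ?_ ?_ ?_ ?_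
      · intro T hT
        obtain ⟨h1, h2⟩ := splitT_spec hT
        exact mem_sigma.mpr ⟨h1, h2⟩
      · intro p hp
        obtain ⟨h1, h2⟩ := mem_sigma.mp hp
        exact glue_mem h1 h2
      · intro T hT
        exact glue_splitT hT
      · intro p hp
        obtain ⟨h1, h2⟩ := mem_sigma.mp hp
        rw [splitT_glue h1 h2]
      · intro T hT
        obtain ⟨h1, h2⟩ := splitT_spec hT
        obtain ⟨he, hle⟩ := glue_urr h1 h2
        rw [glue_splitT hT] at he
        congr 1
        omega
    rw [key, Finset.sum_sigma]
    have inner : ∀ T' ∈ ATB m,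
        ∑ d ∈ fiberOptions m T', x ^ (urrB m T'.1 T'.2.1 T'.2.2 - dsize d)
          = (2 * (x+1)) * (x + 1) ^ (urrB m T'.1 T'.2.1 T'.2.2 - 1) := by
      intro T' hT'
      rw [sum_fiberOptions]
      have hpos := urr_pos m hm T' hT'
      have he : (urrB m T'.1 T'.2.1 T'.2.2 - 1) + 1 = urrB m T'.1 T'.2.1 T'.2.2 := by omega
      calc 2 * (x + 1) ^ urrB m T'.1 T'.2.1 T'.2.2
          = 2 * (x + 1) ^ ((urrB m T'.1 T'.2.1 T'.2.2 - 1) + 1) := by rw [he]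
        _ = (2 * (x+1)) * (x + 1) ^ (urrB m T'.1 T'.2.1 T'.2.2 - 1) := by
            rw [pow_succ]; ring
    rw [Finset.sum_congr rfl inner, ← Finset.mul_sum, ih (x+1)]
    have hm1 : m = (m - 1) + 1 := by omega
    have hsucc : (m + 1 : ℕ) - 1 = m := by omega
    rw [hsucc, hm1, ascPochhammer_succ_left]
    rw [eval_mul, eval_X, eval_comp, eval_add, eval_X, eval_one]
    rw [← hm1]
    ring

end ATBaux

/-- for `n ≥ 1`,
`∑_{T ∈ 𝒜𝒯^B_n} x^{urr T - 1} = 2^n (x+1)_{n-1}`. -/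
theorem atb_enumeration (n : ℕ) (hn : 1 ≤ n) (x : ℤ) :
    ∑ T ∈ ATB n, x ^ (urrB n T.1 T.2.1 T.2.2 - 1) =
      2 ^ n * (ascPochhammer ℤ (n - 1)).eval (x + 1) := by
  exact ATBaux.main_sum n hn x
end

section
/- The map Φ_B is a bijection between type B alternative tableaux of size n and type B linked partitions of {1,...,n}; moreover the labels of the unrestricted rows of T are exactly the labels of the origins and singletons of Φ_B(T). -/
open Finset Polynomial
open scoped Classical

/-!
`Φ_B` has an explicit inverse `PsiB`. In `Φ_B(T)` the columns with an up arrow are exactly the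
legal destinations in `[1, n]`, and the left arrow of a row `y` lies in the largest of `-x`, for
`(x, y)` the arc into `y`, and the legal destinations reachable from `y` (`colOf`). The rows of an
up column `c` are the class of `c` under `colOf` together with the source of the least element of
that class, which carries the up arrow. Conversely, since every vertex of a linked partition has at
most one incoming arc, the vertices from which `c` is reachable are totally ordered by
reachability, and walking back along a path shows that consecutive members of the class of `c` are
joined by an arc; so `Φ_B ∘ PsiB` returns the arcs one started with. The unrestricted rows are
exactly the vertices without an incoming arc, because the targets of `Φ_B(T)` are the rows with a
left arrow and the columns with an up arrow.
-/

open Relation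

section ConsecPairs

variable {S : Finset ℤ} {a b : ℤ}

theorem mem_consecPairsZ :
    (a, b) ∈ consecPairsZ S ↔ a ∈ S ∧ b ∈ S ∧ a < b ∧ ∀ k ∈ S, ¬(a < k ∧ k < b) := by
  simp [consecPairsZ, and_assoc]

theorem mem_consecPairsZ_of_forall_le (ha : a ∈ S) (hb : b ∈ S) (hab : a < b)
    (hmax : ∀ k ∈ S, k < b → k ≤ a) : (a, b) ∈ consecPairsZ S :=
  mem_consecPairsZ.2 ⟨ha, hb, hab, fun k hk h => (hmax k hk h.2).not_gt h.1⟩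

theorem fst_eq_of_mem_consecPairsZ {a' : ℤ} (h : (a, b) ∈ consecPairsZ S)
    (h' : (a', b) ∈ consecPairsZ S) : a = a' := by
  rw [mem_consecPairsZ] at h h'
  by_contra hne
  rcases lt_or_gt_of_ne hne with hlt | hlt
  · exact h.2.2.2 a' h'.1 ⟨hlt, h'.2.2.1⟩
  · exact h'.2.2.2 a h.1 ⟨hlt, h.2.2.1⟩

theorem exists_mem_consecPairsZ_of_lt (ha : a ∈ S) (hb : b ∈ S) (hab : a < b) :
    ∃ a', a ≤ a' ∧ (a', b) ∈ consecPairsZ S := by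
  have hbelow : (S.filter (· < b)).Nonempty := ⟨a, by simp [ha, hab]⟩
  obtain ⟨hmaxS, hmaxb⟩ := Finset.mem_filter.1 ((S.filter (· < b)).max'_mem hbelow)
  exact ⟨_, (S.filter (· < b)).le_max' a (by simp [ha, hab]),
    mem_consecPairsZ_of_forall_le hmaxS hb hmaxb
      fun k hk hkb => (S.filter (· < b)).le_max' k (by simp [hk, hkb])⟩

theorem transGen_of_consecPairsZ {r : ℤ → ℤ → Prop} (hS : ∀ p ∈ consecPairsZ S, r p.1 p.2)
    (ha : a ∈ S) (hb : b ∈ S) (hab : a < b) : TransGen r a b := by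
  induction hd : (b - a).toNat using Nat.strong_induction_on generalizing b with
  | _ d ih =>
    obtain ⟨a', haa', hcons⟩ := exists_mem_consecPairsZ_of_lt ha hb hab
    obtain ⟨ha'S, -, ha'b, -⟩ := mem_consecPairsZ.1 hcons
    rcases haa'.eq_or_lt with rfl | hlt
    · exact .single (hS _ hcons)
    · exact (ih _ (by omega) ha'S hlt rfl).tail (hS _ hcons)

end ConsecPairs

def Arc (A : Finset (ℤ × ℤ)) (x y : ℤ) : Prop := (x, y) ∈ A

namespace Arc

variable {A : Finset (ℤ × ℤ)} {x y z : ℤ}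

theorem transGen_lt (hA : ∀ p ∈ A, p.1 < p.2) (h : TransGen (Arc A) x y) : x < y := by
  have := TransGen.mono (p := (· < ·)) (fun a b hab => hA _ hab) x y h
  rwa [transGen_eq_self] at this

theorem reflTransGen_le (hA : ∀ p ∈ A, p.1 < p.2) (h : ReflTransGen (Arc A) x y) : x ≤ y := by
  rcases reflTransGen_iff_eq_or_transGen.1 h with rfl | h
  · exact le_rfl
  · exact (transGen_lt hA h).le

theorem reflTransGen_total (hA : ∀ p ∈ A, ∀ q ∈ A, p.2 = q.2 → p.1 = q.1)
    (hx : ReflTransGen (Arc A) x z) (hy : ReflTransGen (Arc A) y z) :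
    ReflTransGen (Arc A) x y ∨ ReflTransGen (Arc A) y x := by
  have hu : Relator.RightUnique (Function.swap (Arc A)) := fun a b c hab hac => hA _ hab _ hac rfl
  simpa only [reflTransGen_swap, or_comm] using
    ReflTransGen.total_of_right_unique hu (reflTransGen_swap.2 hx) (reflTransGen_swap.2 hy)

end Arc

/-- Junk value `0` when no arc ends at `y`. -/
noncomputable def arcSrc (A : Finset (ℤ × ℤ)) (y : ℤ) : ℤ :=
  if h : ∃ x, (x, y) ∈ A then h.choose else 0

theorem arcSrc_mem {A : Finset (ℤ × ℤ)} {y : ℤ} (h : ∃ x, (x, y) ∈ A) : (arcSrc A y, y) ∈ A := by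
  rw [arcSrc, dif_pos h]
  exact h.choose_spec

theorem arcSrc_eq {A : Finset (ℤ × ℤ)} (hA : ∀ p ∈ A, ∀ q ∈ A, p.2 = q.2 → p.1 = q.1)
    {x y : ℤ} (h : (x, y) ∈ A) : arcSrc A y = x :=
  hA _ (arcSrc_mem ⟨x, h⟩) _ h rfl

theorem mem_image_snd {α β : Type*} [DecidableEq β] {A : Finset (α × β)} {y : β} :
    y ∈ A.image Prod.snd ↔ ∃ x, (x, y) ∈ A := by
  simp

section Tableau

variable {n : ℕ} {C : Finset ℤ} {L U : Finset (ℤ × ℤ)} {r c : ℤ}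

theorem mem_colRowsB : r ∈ colRowsB L U c ↔ (r, c) ∈ L ∪ U := by
  simp [colRowsB]

theorem mem_insert_colRowsB {z : ℤ} :
    z ∈ insert c (colRowsB L U c) ↔ z = c ∨ (z, c) ∈ L ∪ U := by
  rw [Finset.mem_insert, mem_colRowsB]

theorem hasUp_iff : HasUp U c ↔ ∃ u, (u, c) ∈ U := by
  simp [HasUp]

theorem mem_left_of_not_hasUp (hc : ¬ HasUp U c) (h : (r, c) ∈ L ∪ U) : (r, c) ∈ L :=
  (Finset.mem_union.1 h).resolve_right fun hr => hc ⟨_, hr, rfl⟩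

namespace IsATB

theorem col_mem_Icc (hT : IsATB n C L U) (hc : c ∈ C) : 1 ≤ c ∧ c ≤ n :=
  Finset.mem_Icc.1 (hT.1 hc)

theorem col_mem (hT : IsATB n C L U) (h : (r, c) ∈ L ∪ U) : c ∈ C :=
  (hT.2.2.1 _ h).1

theorem abs_row_lt (hT : IsATB n C L U) (h : (r, c) ∈ L ∪ U) : |r| < c := by
  rcases (hT.2.2.1 _ h).2 with ⟨h1, -, -, hlt⟩ | ⟨hneg, -, hlt⟩
  · rwa [abs_of_pos (by omega)]
  · rwa [abs_of_neg hneg]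

theorem row_lt (hT : IsATB n C L U) (h : (r, c) ∈ L ∪ U) : r < c :=
  lt_of_abs_lt (hT.abs_row_lt h)

theorem row_ne_zero (hT : IsATB n C L U) (h : (r, c) ∈ L ∪ U) : r ≠ 0 := by
  rcases (hT.2.2.1 _ h).2 with ⟨h1, -⟩ | ⟨hneg, -⟩ <;> omega

theorem row_not_mem (hT : IsATB n C L U) (h : (r, c) ∈ L ∪ U) : r ∉ C := by
  intro hr
  rcases (hT.2.2.1 _ h).2 with ⟨-, -, hnC, -⟩ | ⟨hneg, -⟩
  · exact hnC hr
  · have := (hT.col_mem_Icc hr).1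
    omega

theorem neg_row_mem (hT : IsATB n C L U) (h : (r, c) ∈ L ∪ U) (hr : r < 0) : -r ∈ C := by
  rcases (hT.2.2.1 _ h).2 with ⟨h1, -⟩ | ⟨-, hmem, -⟩
  · omega
  · exact hmem

theorem up_le (hT : IsATB n C L U) {u : ℤ} (hu : (u, c) ∈ U) (h : (r, c) ∈ L ∪ U) : u ≤ r :=
  not_lt.1 fun hlt => hT.2.2.2.2.1 _ hu r hlt h

theorem up_unique (hT : IsATB n C L U) {u u' : ℤ} (hu : (u, c) ∈ U) (hu' : (u', c) ∈ U) :
    u = u' :=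
  le_antisymm (hT.up_le hu (Finset.mem_union_right _ hu'))
    (hT.up_le hu' (Finset.mem_union_right _ hu))

theorem mem_left_of_ne_up (hT : IsATB n C L U) {u : ℤ} (hu : (u, c) ∈ U)
    (h : (r, c) ∈ L ∪ U) (hne : r ≠ u) : (r, c) ∈ L :=
  (Finset.mem_union.1 h).resolve_right fun hr => hne (hT.up_unique hr hu)

theorem not_mem_up_of_mem_left (hT : IsATB n C L U) (h : (r, c) ∈ L) : (r, c) ∉ U :=
  Finset.disjoint_left.1 hT.2.1 h

theorem le_of_mem_left (hT : IsATB n C L U) {c' : ℤ} (h : (r, c) ∈ L) (h' : (r, c') ∈ L ∪ U) :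
    c' ≤ c :=
  not_lt.1 fun hlt => hT.2.2.2.1 _ h c' hlt h'

theorem left_unique (hT : IsATB n C L U) {c' : ℤ} (h : (r, c) ∈ L) (h' : (r, c') ∈ L) : c = c' :=
  le_antisymm (hT.le_of_mem_left h' (Finset.mem_union_left _ h))
    (hT.le_of_mem_left h (Finset.mem_union_left _ h'))

theorem not_hasUp_neg_row (hT : IsATB n C L U) (h : (r, c) ∈ L ∪ U) (hr : r < 0) :
    ¬ HasUp U (-r) :=
  fun hup => hT.2.2.2.2.2 (-r) (hT.neg_row_mem h hr) hup c (by rwa [neg_neg])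

end IsATB

theorem mem_PhiB_fst {v : ℤ} :
    v ∈ (PhiB n (C, L, U)).1 ↔
      (1 ≤ v ∧ v ≤ n ∧ v ∉ C) ∨ (v ∈ C ∧ HasUp U v) ∨ ∃ c ∈ C, ¬ HasUp U c ∧ v = -c := by
  simp only [PhiB, Finset.mem_union, Finset.mem_sdiff, Finset.mem_Icc, Finset.mem_filter,
    Finset.mem_image, and_assoc, or_assoc, eq_comm (a := v)]

theorem mem_PhiB_snd {x y : ℤ} :
    (x, y) ∈ (PhiB n (C, L, U)).2 ↔
      ∃ c ∈ C, (HasUp U c ∧ (x, y) ∈ consecPairsZ (insert c (colRowsB L U c))) ∨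
        (¬ HasUp U c ∧ x = -c ∧ (y, c) ∈ L) := by
  simp only [PhiB, Finset.mem_union, Finset.mem_biUnion, Finset.mem_filter, Finset.mem_image,
    Prod.mk.injEq]
  constructor
  · rintro (⟨c, ⟨hc, hup⟩, hp⟩ | ⟨c, ⟨hc, hup⟩, r, hr, rfl, rfl⟩)
    · exact ⟨c, hc, .inl ⟨hup, hp⟩⟩
    · exact ⟨c, hc, .inr ⟨hup, rfl, mem_left_of_not_hasUp hup (mem_colRowsB.1 hr)⟩⟩
  · rintro ⟨c, hc, ⟨hup, hp⟩ | ⟨hup, rfl, hy⟩⟩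
    · exact .inl ⟨c, ⟨hc, hup⟩, hp⟩
    · exact .inr ⟨c, ⟨hc, hup⟩, y, mem_colRowsB.2 (Finset.mem_union_left _ hy), rfl, rfl⟩

end Tableau

theorem mem_ATB {n : ℕ} {T : Finset ℤ × Finset (ℤ × ℤ) × Finset (ℤ × ℤ)} :
    T ∈ ATB n ↔ IsATB n T.1 T.2.1 T.2.2 := by
  refine ⟨fun h => (Finset.mem_filter.1 h).2, fun h => Finset.mem_filter.2 ⟨?_, h⟩⟩
  have hcell : ∀ p ∈ T.2.1 ∪ T.2.2,
      p ∈ Finset.Icc (-(n : ℤ)) n ×ˢ Finset.Icc (1 : ℤ) n := by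
    rintro ⟨r, c⟩ hp
    have := h.abs_row_lt hp
    have := h.col_mem_Icc (h.col_mem hp)
    simp only [Finset.mem_product, Finset.mem_Icc, abs_lt] at *
    omega
  simp only [Finset.mem_product, Finset.mem_powerset]
  exact ⟨h.1, fun p hp => hcell p (Finset.mem_union_left _ hp),
    fun p hp => hcell p (Finset.mem_union_right _ hp)⟩

theorem mem_LPB {n : ℕ} {P : Finset ℤ × Finset (ℤ × ℤ)} : P ∈ LPB n ↔ IsLPB n P.1 P.2 := by
  refine ⟨fun h => (Finset.mem_filter.1 h).2, fun h => Finset.mem_filter.2 ⟨?_, h⟩⟩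
  have hV : ∀ v ∈ P.1, v ∈ Finset.Icc (-(n : ℤ)) n := by
    intro v hv
    have := h.1 v hv
    rw [Finset.mem_Icc]
    constructor <;> cases abs_cases v <;> omega
  simp only [Finset.mem_product, Finset.mem_powerset]
  exact ⟨hV, fun p hp => Finset.mem_product.2
    ⟨hV _ (h.2.2.1 p hp).1, hV _ (h.2.2.1 p hp).2.1⟩⟩

namespace IsATB

variable {n : ℕ} {C : Finset ℤ} {L U : Finset (ℤ × ℤ)} {x y z r c : ℤ}

theorem le_of_mem_insert_colRowsB (hT : IsATB n C L U) (hz : z ∈ insert c (colRowsB L U c)) :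
    z ≤ c := by
  rcases mem_insert_colRowsB.1 hz with rfl | hz
  · exact le_rfl
  · exact (hT.row_lt hz).le

theorem row_mem_PhiB_fst (hT : IsATB n C L U) (h : (r, c) ∈ L ∪ U) :
    r ∈ (PhiB n (C, L, U)).1 := by
  rcases lt_or_gt_of_ne (hT.row_ne_zero h) with hneg | hpos
  · exact mem_PhiB_fst.2 (.inr (.inr ⟨-r, hT.neg_row_mem h hneg,
      hT.not_hasUp_neg_row h hneg, (neg_neg r).symm⟩))
  · have := hT.row_lt h
    have := (hT.col_mem_Icc (hT.col_mem h)).2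
    exact mem_PhiB_fst.2 (.inl ⟨hpos, by omega, hT.row_not_mem h⟩)

theorem upCol_mem_PhiB_fst (hT : IsATB n C L U) (hup : HasUp U c) :
    c ∈ (PhiB n (C, L, U)).1 := by
  obtain ⟨u, hu⟩ := hasUp_iff.1 hup
  exact mem_PhiB_fst.2 (.inr (.inl ⟨hT.col_mem (Finset.mem_union_right _ hu), hup⟩))

theorem mem_PhiB_fst_of_mem_insert_colRowsB (hT : IsATB n C L U) (hup : HasUp U c)
    (hz : z ∈ insert c (colRowsB L U c)) : z ∈ (PhiB n (C, L, U)).1 := by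
  rcases mem_insert_colRowsB.1 hz with rfl | hz
  · exact hT.upCol_mem_PhiB_fst hup
  · exact hT.row_mem_PhiB_fst hz

theorem arc_cases (hT : IsATB n C L U) (h : (x, y) ∈ (PhiB n (C, L, U)).2) :
    (y ∈ C ∧ HasUp U y ∧ (x, y) ∈ consecPairsZ (insert y (colRowsB L U y))) ∨
      ∃ c, (y, c) ∈ L ∧ ((HasUp U c ∧ (x, y) ∈ consecPairsZ (insert c (colRowsB L U c))) ∨
        (¬ HasUp U c ∧ x = -c)) := by
  obtain ⟨c, hc, ⟨hup, hp⟩ | ⟨hup, rfl, hy⟩⟩ := mem_PhiB_snd.1 h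
  · obtain ⟨hx, hyS, hxy, -⟩ := mem_consecPairsZ.1 hp
    rcases mem_insert_colRowsB.1 hyS with rfl | hyc
    · exact .inl ⟨hc, hup, hp⟩
    · obtain ⟨u, hu⟩ := hasUp_iff.1 hup
      refine .inr ⟨c, hT.mem_left_of_ne_up hu hyc ?_, .inl ⟨hup, hp⟩⟩
      rintro rfl
      rcases mem_insert_colRowsB.1 hx with rfl | hxc
      · exact (hT.row_lt hyc).not_gt hxy
      · exact (hT.up_le hu hxc).not_gt hxy
  · exact .inr ⟨c, hy, .inr ⟨hup, rfl⟩⟩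

theorem arc_src_not_mem (hT : IsATB n C L U) (h : (x, y) ∈ (PhiB n (C, L, U)).2) : x ∉ C := by
  intro hxC
  have hx1 := (hT.col_mem_Icc hxC).1
  obtain ⟨c, hc, ⟨-, hp⟩ | ⟨-, rfl, -⟩⟩ := mem_PhiB_snd.1 h
  · obtain ⟨hx, hy, hxy, -⟩ := mem_consecPairsZ.1 hp
    have := hT.le_of_mem_insert_colRowsB hy
    rcases mem_insert_colRowsB.1 hx with rfl | hxc
    · omega
    · exact hT.row_not_mem hxc hxC
  · have := (hT.col_mem_Icc hc).1
    omega

theorem arc_lt (hT : IsATB n C L U) (h : (x, y) ∈ (PhiB n (C, L, U)).2) : x < y := by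
  obtain ⟨c, -, ⟨-, hp⟩ | ⟨-, rfl, hy⟩⟩ := mem_PhiB_snd.1 h
  · exact (mem_consecPairsZ.1 hp).2.2.1
  · exact neg_lt_of_abs_lt (hT.abs_row_lt (Finset.mem_union_left _ hy))

theorem arc_mem_PhiB_fst (hT : IsATB n C L U) (h : (x, y) ∈ (PhiB n (C, L, U)).2) :
    x ∈ (PhiB n (C, L, U)).1 ∧ y ∈ (PhiB n (C, L, U)).1 := by
  obtain ⟨c, hc, ⟨hup, hp⟩ | ⟨hup, rfl, hy⟩⟩ := mem_PhiB_snd.1 h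
  · obtain ⟨hx, hy, -⟩ := mem_consecPairsZ.1 hp
    exact ⟨hT.mem_PhiB_fst_of_mem_insert_colRowsB hup hx,
      hT.mem_PhiB_fst_of_mem_insert_colRowsB hup hy⟩
  · exact ⟨mem_PhiB_fst.2 (.inr (.inr ⟨c, hc, hup, rfl⟩)),
      hT.row_mem_PhiB_fst (Finset.mem_union_left _ hy)⟩

theorem arc_left_unique (hT : IsATB n C L U) :
    ∀ p ∈ (PhiB n (C, L, U)).2, ∀ q ∈ (PhiB n (C, L, U)).2, p.2 = q.2 → p.1 = q.1 := by
  rintro ⟨x, y⟩ hp ⟨x', y'⟩ hq (rfl : y = y')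
  rcases hT.arc_cases hp with ⟨hyC, -, hcp⟩ | ⟨c, hyL, hcol⟩ <;>
    rcases hT.arc_cases hq with ⟨hyC', -, hcp'⟩ | ⟨c', hyL', hcol'⟩
  · exact fst_eq_of_mem_consecPairsZ hcp hcp'
  · exact absurd hyC (hT.row_not_mem (Finset.mem_union_left _ hyL'))
  · exact absurd hyC' (hT.row_not_mem (Finset.mem_union_left _ hyL))
  · obtain rfl := hT.left_unique hyL hyL'
    rcases hcol with ⟨hup, hcp⟩ | ⟨hup, rfl⟩ <;> rcases hcol' with ⟨hup', hcp'⟩ | ⟨hup', rfl⟩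
    · exact fst_eq_of_mem_consecPairsZ hcp hcp'
    · exact absurd hup hup'
    · exact absurd hup' hup
    · rfl

theorem exists_arc_to_upCol (hT : IsATB n C L U) (hup : HasUp U c) :
    ∃ x, (x, c) ∈ (PhiB n (C, L, U)).2 ∧ |x| < c := by
  obtain ⟨u, hu⟩ := hasUp_iff.1 hup
  have huc : (u, c) ∈ L ∪ U := Finset.mem_union_right _ hu
  obtain ⟨x, -, hcons⟩ := exists_mem_consecPairsZ_of_lt (mem_insert_colRowsB.2 (.inr huc))
    (Finset.mem_insert_self c _) (hT.row_lt huc)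
  obtain ⟨hx, -, hxc, -⟩ := mem_consecPairsZ.1 hcons
  have hxc' : (x, c) ∈ L ∪ U := (mem_insert_colRowsB.1 hx).resolve_left hxc.ne
  exact ⟨x, mem_PhiB_snd.2 ⟨c, hT.col_mem huc, .inl ⟨hup, hcons⟩⟩, hT.abs_row_lt hxc'⟩

theorem exists_arc_to_left (hT : IsATB n C L U) (hyL : (y, c) ∈ L) :
    ∃ x, (x, y) ∈ (PhiB n (C, L, U)).2 := by
  have hy : (y, c) ∈ L ∪ U := Finset.mem_union_left _ hyL
  by_cases hup : HasUp U c
  · obtain ⟨u, hu⟩ := hasUp_iff.1 hup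
    have huy : u < y := (hT.up_le hu hy).lt_of_ne fun h => hT.not_mem_up_of_mem_left hyL (h ▸ hu)
    obtain ⟨x, -, hcons⟩ := exists_mem_consecPairsZ_of_lt
      (mem_insert_colRowsB.2 (.inr (Finset.mem_union_right _ hu)))
      (mem_insert_colRowsB.2 (.inr hy)) huy
    exact ⟨x, mem_PhiB_snd.2 ⟨c, hT.col_mem hy, .inl ⟨hup, hcons⟩⟩⟩
  · exact ⟨-c, mem_PhiB_snd.2 ⟨c, hT.col_mem hy, .inr ⟨hup, rfl, hyL⟩⟩⟩

theorem transGen_to_upCol (hT : IsATB n C L U) (hy : (y, c) ∈ L ∪ U) (hup : HasUp U c) :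
    TransGen (Arc (PhiB n (C, L, U)).2) y c :=
  transGen_of_consecPairsZ (fun _ hp => mem_PhiB_snd.2 ⟨c, hT.col_mem hy, .inl ⟨hup, hp⟩⟩)
    (mem_insert_colRowsB.2 (.inr hy)) (Finset.mem_insert_self c _) (hT.row_lt hy)

theorem exists_arc_to_iff (hT : IsATB n C L U) :
    (∃ x, (x, y) ∈ (PhiB n (C, L, U)).2) ↔ (∃ c, (y, c) ∈ L) ∨ (y ∈ C ∧ HasUp U y) := by
  constructor
  · rintro ⟨x, hx⟩
    rcases hT.arc_cases hx with ⟨hyC, hup, -⟩ | ⟨c, hyL, -⟩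
    · exact .inr ⟨hyC, hup⟩
    · exact .inl ⟨c, hyL⟩
  · rintro (⟨c, hyL⟩ | ⟨-, hup⟩)
    · exact hT.exists_arc_to_left hyL
    · obtain ⟨x, hx, -⟩ := hT.exists_arc_to_upCol hup
      exact ⟨x, hx⟩

theorem neg_mem_PhiB_fst_iff (hT : IsATB n C L U) {i : ℤ} (hi : 1 ≤ i) :
    -i ∈ (PhiB n (C, L, U)).1 ↔ i ∈ C ∧ ¬ HasUp U i := by
  rw [mem_PhiB_fst]
  constructor
  · rintro (⟨h, -⟩ | ⟨h, -⟩ | ⟨c, hc, hup, he⟩)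
    · omega
    · have := (hT.col_mem_Icc h).1
      omega
    · obtain rfl : c = i := by omega
      exact ⟨hc, hup⟩
  · exact fun h => .inr (.inr ⟨i, h.1, h.2, rfl⟩)

theorem pos_mem_PhiB_fst_iff (hT : IsATB n C L U) {i : ℤ} (hi : 1 ≤ i) (hin : i ≤ n) :
    i ∈ (PhiB n (C, L, U)).1 ↔ i ∉ C ∨ HasUp U i := by
  rw [mem_PhiB_fst]
  constructor
  · rintro (⟨-, -, h⟩ | ⟨-, h⟩ | ⟨c, hc, -, rfl⟩)
    · exact .inl h
    · exact .inr h
    · have := (hT.col_mem_Icc hc).1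
      omega
  · rintro (h | h)
    · exact .inl ⟨hi, hin, h⟩
    · obtain ⟨u, hu⟩ := hasUp_iff.1 h
      exact .inr (.inl ⟨hT.col_mem (Finset.mem_union_right _ hu), h⟩)

theorem abs_mem_PhiB_fst (hT : IsATB n C L U) {v : ℤ} (hv : v ∈ (PhiB n (C, L, U)).1) :
    1 ≤ |v| ∧ |v| ≤ n := by
  rcases mem_PhiB_fst.1 hv with ⟨h1, h2, -⟩ | ⟨hc, -⟩ | ⟨c, hc, -, rfl⟩
  · rw [abs_of_pos (by omega)]
    exact ⟨h1, h2⟩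
  · have := hT.col_mem_Icc hc
    rwa [abs_of_pos (by omega)]
  · have := hT.col_mem_Icc hc
    rwa [abs_neg, abs_of_pos (by omega)]

theorem PhiB_isLPB (hT : IsATB n C L U) : IsLPB n (PhiB n (C, L, U)).1 (PhiB n (C, L, U)).2 := by
  refine ⟨fun v hv => hT.abs_mem_PhiB_fst hv, fun i hi => ?_,
    fun p hp => ⟨(hT.arc_mem_PhiB_fst hp).1, (hT.arc_mem_PhiB_fst hp).2, hT.arc_lt hp⟩,
    hT.arc_left_unique⟩
  obtain ⟨hi1, hin⟩ := Finset.mem_Icc.1 hi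
  rw [hT.neg_mem_PhiB_fst_iff hi1, hT.pos_mem_PhiB_fst_iff hi1 hin]
  tauto

end IsATB

theorem mem_rowsB {n : ℕ} {C : Finset ℤ} {x : ℤ} :
    x ∈ rowsB n C ↔ (1 ≤ x ∧ x ≤ n ∧ x ∉ C) ∨ ∃ c ∈ C, x = -c := by
  simp only [rowsB, Finset.mem_union, Finset.mem_sdiff, Finset.mem_Icc, Finset.mem_image,
    and_assoc, eq_comm (a := x)]

theorem forall_mem_fst_ne_iff {α β : Type*} {A : Finset (α × β)} {x : α} :
    (∀ p ∈ A, p.1 ≠ x) ↔ ∀ c, (x, c) ∉ A :=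
  ⟨fun h c hc => h _ hc rfl, fun h p hp hpx => h p.2 (by rwa [← hpx])⟩

theorem forall_mem_snd_ne_iff {α β : Type*} {A : Finset (α × β)} {y : β} :
    (∀ p ∈ A, p.2 ≠ y) ↔ ∀ x, (x, y) ∉ A :=
  ⟨fun h x hx => h _ hx rfl, fun h p hp hpy => h p.1 (by rwa [← hpy])⟩

theorem IsATB.unrestricted_rows_eq {n : ℕ} {C : Finset ℤ} {L U : Finset (ℤ × ℤ)}
    (hT : IsATB n C L U) :
    (rowsB n C).filter (fun x => (∀ p ∈ L, p.1 ≠ x) ∧ ∀ p ∈ U, p.2 ≠ |x|) =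
      (PhiB n (C, L, U)).1.filter (fun v => ∀ p ∈ (PhiB n (C, L, U)).2, p.2 ≠ v) := by
  ext x
  simp only [Finset.mem_filter, forall_mem_fst_ne_iff, forall_mem_snd_ne_iff]
  constructor
  · rintro ⟨hx, hL, hU⟩
    refine ⟨?_, fun y hy => ?_⟩
    · rcases mem_rowsB.1 hx with ⟨h1, h2, h3⟩ | ⟨c, hc, rfl⟩
      · exact mem_PhiB_fst.2 (.inl ⟨h1, h2, h3⟩)
      · have := (hT.col_mem_Icc hc).1
        refine mem_PhiB_fst.2 (.inr (.inr ⟨c, hc, fun hup => ?_, rfl⟩))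
        obtain ⟨u, hu⟩ := hasUp_iff.1 hup
        exact hU u (by rwa [abs_neg, abs_of_pos (by omega)])
    · rcases hT.arc_cases hy with ⟨hxC, -⟩ | ⟨c, hxL, -⟩
      · rcases mem_rowsB.1 hx with ⟨-, -, h3⟩ | ⟨c, hc, rfl⟩
        · exact h3 hxC
        · have := (hT.col_mem_Icc hc).1
          have := (hT.col_mem_Icc hxC).1
          omega
      · exact hL c hxL
  · rintro ⟨hx, hin⟩
    have hnot : ¬((∃ c, (x, c) ∈ L) ∨ (x ∈ C ∧ HasUp U x)) :=
      hT.exists_arc_to_iff.not.1 fun ⟨y, hy⟩ => hin y hy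
    refine ⟨?_, fun c hc => hnot (.inl ⟨c, hc⟩), fun u hu => ?_⟩
    · rcases mem_PhiB_fst.1 hx with ⟨h1, h2, h3⟩ | h | ⟨c, hc, -, rfl⟩
      · exact mem_rowsB.2 (.inl ⟨h1, h2, h3⟩)
      · exact absurd (.inr h) hnot
      · exact mem_rowsB.2 (.inr ⟨c, hc, rfl⟩)
    · rcases mem_PhiB_fst.1 hx with ⟨h1, -, h3⟩ | h | ⟨c, hc, hup, rfl⟩
      · rw [abs_of_pos (by omega)] at hu
        exact h3 (hT.col_mem (Finset.mem_union_right _ hu))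
      · exact hnot (.inr h)
      · have := (hT.col_mem_Icc hc).1
        rw [abs_neg, abs_of_pos (by omega)] at hu
        exact hup ⟨_, hu, rfl⟩

noncomputable def legalDests (n : ℕ) (A : Finset (ℤ × ℤ)) : Finset ℤ :=
  (Finset.Icc (1 : ℤ) n).filter (IsLegalDestB A)

noncomputable def colCandidates (n : ℕ) (A : Finset (ℤ × ℤ)) (y : ℤ) : Finset ℤ :=
  insert (-arcSrc A y) ((legalDests n A).filter (TransGen (Arc A) y))

/-- The column of the left arrow in row `y`. If that column `c` has an up arrow, `y` reaches
`c` along its chain and reaches no up column beyond `c`; otherwise the arc into `y` comes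
from `-c`. Either way `c` is the largest candidate. -/
noncomputable def colOf (n : ℕ) (A : Finset (ℤ × ℤ)) (y : ℤ) : ℤ :=
  if y ∈ legalDests n A then y else (colCandidates n A y).max' (Finset.insert_nonempty _ _)

noncomputable def colClass (n : ℕ) (A : Finset (ℤ × ℤ)) (c : ℤ) : Finset ℤ :=
  (A.image Prod.snd).filter (colOf n A · = c)

noncomputable def colClassMin (n : ℕ) (A : Finset (ℤ × ℤ)) (c : ℤ) : ℤ :=
  if h : (colClass n A c).Nonempty then (colClass n A c).min' h else 0

noncomputable def PsiB (n : ℕ) (P : Finset ℤ × Finset (ℤ × ℤ)) :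
    Finset ℤ × Finset (ℤ × ℤ) × Finset (ℤ × ℤ) :=
  (legalDests n P.2 ∪ (Finset.Icc (1 : ℤ) n).filter (fun c => -c ∈ P.1),
   ((P.2.image Prod.snd).filter (· ∉ legalDests n P.2)).image (fun y => (y, colOf n P.2 y)),
   (legalDests n P.2).image (fun c => (arcSrc P.2 (colClassMin n P.2 c), c)))

section Inverse

variable {n : ℕ} {V : Finset ℤ} {A : Finset (ℤ × ℤ)} {x y c d : ℤ}

theorem mem_legalDests : c ∈ legalDests n A ↔ (1 ≤ c ∧ c ≤ n) ∧ IsLegalDestB A c := by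
  rw [legalDests, Finset.mem_filter, Finset.mem_Icc]

theorem not_arc_of_mem_legalDests {z : ℤ} (hc : c ∈ legalDests n A) : (c, z) ∉ A :=
  fun h => (mem_legalDests.1 hc).2.2 _ h rfl

theorem exists_arc_of_mem_legalDests (hc : c ∈ legalDests n A) : ∃ x, (x, c) ∈ A := by
  obtain ⟨⟨x, c'⟩, hp, rfl, -⟩ := (mem_legalDests.1 hc).2.1
  exact ⟨x, hp⟩

theorem colOf_of_mem_legalDests (hc : c ∈ legalDests n A) : colOf n A c = c := by
  rw [colOf, if_pos hc]

theorem colOf_mem_colCandidates (hy : y ∉ legalDests n A) :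
    colOf n A y ∈ colCandidates n A y := by
  rw [colOf, if_neg hy]
  exact Finset.max'_mem _ _

theorem le_colOf (hy : y ∉ legalDests n A) (hz : d ∈ colCandidates n A y) : d ≤ colOf n A y := by
  rw [colOf, if_neg hy]
  exact Finset.le_max' _ _ hz

theorem neg_arcSrc_le_colOf (hy : y ∉ legalDests n A) : -arcSrc A y ≤ colOf n A y :=
  le_colOf hy (Finset.mem_insert_self _ _)

theorem le_colOf_of_transGen (hy : y ∉ legalDests n A) (hc : c ∈ legalDests n A)
    (h : TransGen (Arc A) y c) : c ≤ colOf n A y :=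
  le_colOf hy (Finset.mem_insert_of_mem (Finset.mem_filter.2 ⟨hc, h⟩))

theorem colOf_eq_of_forall_le (hy : y ∉ legalDests n A) (hc : c ∈ colCandidates n A y)
    (hle : ∀ d ∈ colCandidates n A y, d ≤ c) : colOf n A y = c :=
  le_antisymm (hle _ (colOf_mem_colCandidates hy)) (le_colOf hy hc)

theorem colOf_cases (hy : y ∉ legalDests n A) :
    colOf n A y = -arcSrc A y ∨
      (colOf n A y ∈ legalDests n A ∧ TransGen (Arc A) y (colOf n A y)) := by
  simpa [colCandidates] using colOf_mem_colCandidates hy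

theorem mem_colClass : y ∈ colClass n A c ↔ (∃ x, (x, y) ∈ A) ∧ colOf n A y = c := by
  rw [colClass, Finset.mem_filter, mem_image_snd]

theorem colClassMin_mem (h : (colClass n A c).Nonempty) : colClassMin n A c ∈ colClass n A c := by
  rw [colClassMin, dif_pos h]
  exact Finset.min'_mem _ h

theorem colClassMin_le (hy : y ∈ colClass n A c) : colClassMin n A c ≤ y := by
  rw [colClassMin, dif_pos ⟨y, hy⟩]
  exact Finset.min'_le _ _ hy

theorem mem_PsiB_fst :
    c ∈ (PsiB n (V, A)).1 ↔ c ∈ legalDests n A ∨ ((1 ≤ c ∧ c ≤ n) ∧ -c ∈ V) := by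
  simp only [PsiB, Finset.mem_union, Finset.mem_filter, Finset.mem_Icc]

theorem mem_PsiB_left :
    (y, d) ∈ (PsiB n (V, A)).2.1 ↔
      (∃ x, (x, y) ∈ A) ∧ y ∉ legalDests n A ∧ colOf n A y = d := by
  simp only [PsiB, Finset.mem_image, Prod.mk.injEq]
  constructor
  · rintro ⟨y, hy, rfl, rfl⟩
    obtain ⟨hy, hyC⟩ := Finset.mem_filter.1 hy
    exact ⟨mem_image_snd.1 hy, hyC, rfl⟩
  · rintro ⟨hy, hyC, rfl⟩
    exact ⟨y, Finset.mem_filter.2 ⟨mem_image_snd.2 hy, hyC⟩, rfl, rfl⟩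

theorem mem_PsiB_up :
    (x, d) ∈ (PsiB n (V, A)).2.2 ↔ d ∈ legalDests n A ∧ x = arcSrc A (colClassMin n A d) := by
  simp only [PsiB, Finset.mem_image, Prod.mk.injEq]
  constructor
  · rintro ⟨d, hd, rfl, rfl⟩
    exact ⟨hd, rfl⟩
  · rintro ⟨hd, rfl⟩
    exact ⟨d, hd, rfl, rfl⟩

theorem hasUp_PsiB : HasUp (PsiB n (V, A)).2.2 d ↔ d ∈ legalDests n A := by
  simp only [hasUp_iff, mem_PsiB_up, exists_and_left, exists_eq, and_true]

theorem mem_colRowsB_PsiB :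
    y ∈ colRowsB (PsiB n (V, A)).2.1 (PsiB n (V, A)).2.2 c ↔
      ((∃ x, (x, y) ∈ A) ∧ y ∉ legalDests n A ∧ colOf n A y = c) ∨
        (c ∈ legalDests n A ∧ y = arcSrc A (colClassMin n A c)) := by
  rw [mem_colRowsB, Finset.mem_union, mem_PsiB_left, mem_PsiB_up]

end Inverse

namespace IsATB

variable {n : ℕ} {C : Finset ℤ} {L U : Finset (ℤ × ℤ)} {x y c : ℤ}

theorem isLegalDestB_PhiB_iff (hT : IsATB n C L U) (hc : 1 ≤ c) :
    IsLegalDestB (PhiB n (C, L, U)).2 c ↔ c ∈ C ∧ HasUp U c := by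
  constructor
  · rintro ⟨⟨⟨x, c'⟩, hp, rfl, hxc⟩, hnosrc⟩
    rcases hT.arc_cases hp with ⟨hcC, hup, -⟩ | ⟨d, hcL, ⟨hup, -⟩ | ⟨-, rfl⟩⟩
    · exact ⟨hcC, hup⟩
    · obtain ⟨z, hz, -⟩ := TransGen.head'_iff.1
        (hT.transGen_to_upCol (Finset.mem_union_left _ hcL) hup)
      exact absurd rfl (hnosrc _ hz)
    · have := hT.abs_row_lt (Finset.mem_union_left _ hcL)
      have := le_abs_self d
      simp only [abs_neg] at hxc
      omega
  · rintro ⟨hcC, hup⟩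
    obtain ⟨x, hx, hxc⟩ := hT.exists_arc_to_upCol hup
    refine ⟨⟨(x, c), hx, rfl, by rwa [abs_of_pos (show 0 < c by omega)]⟩, ?_⟩
    rintro ⟨c', z⟩ hp (rfl : c' = c)
    exact hT.arc_src_not_mem hp hcC

theorem legalDests_PhiB (hT : IsATB n C L U) :
    legalDests n (PhiB n (C, L, U)).2 = C.filter (HasUp U) := by
  ext c
  rw [mem_legalDests, Finset.mem_filter]
  constructor
  · rintro ⟨⟨h1, -⟩, hlegal⟩
    exact (hT.isLegalDestB_PhiB_iff h1).1 hlegal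
  · rintro ⟨hcC, hup⟩
    have h := hT.col_mem_Icc hcC
    exact ⟨h, (hT.isLegalDestB_PhiB_iff h.1).2 ⟨hcC, hup⟩⟩

theorem exists_col_ge_of_transGen (hT : IsATB n C L U) {c' : ℤ}
    (h : TransGen (Arc (PhiB n (C, L, U)).2) y c') (hup' : HasUp U c') :
    ∃ d, c' ≤ d ∧ ((y, d) ∈ L ∪ U ∨ y = -d) := by
  obtain ⟨u, hu⟩ := hasUp_iff.1 hup'
  have hc' : c' ∈ C := hT.col_mem (Finset.mem_union_right _ hu)
  induction h using TransGen.head_induction_on with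
  | single hyc =>
    rcases hT.arc_cases hyc with ⟨-, -, hcp⟩ | ⟨d, hc'L, -⟩
    · obtain ⟨hy, -, hlt, -⟩ := mem_consecPairsZ.1 hcp
      exact ⟨c', le_rfl, .inl ((mem_insert_colRowsB.1 hy).resolve_left hlt.ne)⟩
    · exact absurd hc' (hT.row_not_mem (Finset.mem_union_left _ hc'L))
  | @head y z hyz hzc ih =>
    obtain ⟨d', hd', hz⟩ := ih
    rcases hT.arc_cases hyz with ⟨hzC, -⟩ | ⟨e, hzL, hcol⟩
    · obtain ⟨w, hzw, -⟩ := TransGen.head'_iff.1 hzc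
      exact absurd hzC (hT.arc_src_not_mem hzw)
    · have hzabs := hT.abs_row_lt (Finset.mem_union_left _ hzL)
      have hd'e : d' ≤ e := by
        rcases hz with hz | rfl
        · exact hT.le_of_mem_left hzL hz
        · rw [abs_neg] at hzabs
          exact (le_abs_self d').trans hzabs.le
      rcases hcol with ⟨-, hcp⟩ | ⟨-, rfl⟩
      · obtain ⟨hy, -, hlt, -⟩ := mem_consecPairsZ.1 hcp
        have : y ≠ e := by have := lt_of_abs_lt hzabs; omega
        exact ⟨e, by omega, .inl ((mem_insert_colRowsB.1 hy).resolve_left this)⟩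
      · exact ⟨e, by omega, .inr rfl⟩

theorem neg_le_of_arc_to_left (hT : IsATB n C L U) (hyL : (y, c) ∈ L)
    (hx : (x, y) ∈ (PhiB n (C, L, U)).2) : -x ≤ c := by
  have hyabs := hT.abs_row_lt (Finset.mem_union_left _ hyL)
  rcases hT.arc_cases hx with ⟨hyC, -⟩ | ⟨e, hyL', hcol⟩
  · exact absurd hyC (hT.row_not_mem (Finset.mem_union_left _ hyL))
  · obtain rfl := hT.left_unique hyL' hyL
    rcases hcol with ⟨-, hcp⟩ | ⟨-, rfl⟩
    · obtain ⟨hxS, -, hxy, -⟩ := mem_consecPairsZ.1 hcp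
      rcases mem_insert_colRowsB.1 hxS with rfl | hxc
      · have := abs_nonneg y
        omega
      · exact (neg_le_abs x).trans (hT.abs_row_lt hxc).le
    · omega

theorem colOf_PhiB_of_mem_left (hT : IsATB n C L U) (hyL : (y, c) ∈ L) :
    colOf n (PhiB n (C, L, U)).2 y = c := by
  have hy : (y, c) ∈ L ∪ U := Finset.mem_union_left _ hyL
  have hyabs := hT.abs_row_lt hy
  have hyC : y ∉ legalDests n (PhiB n (C, L, U)).2 := by
    rw [hT.legalDests_PhiB, Finset.mem_filter]
    exact fun h => hT.row_not_mem hy h.1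
  obtain ⟨x, hx⟩ := hT.exists_arc_to_left hyL
  apply colOf_eq_of_forall_le hyC
  · by_cases hup : HasUp U c
    · refine Finset.mem_insert_of_mem (Finset.mem_filter.2 ⟨?_, hT.transGen_to_upCol hy hup⟩)
      rw [hT.legalDests_PhiB]
      exact Finset.mem_filter.2 ⟨hT.col_mem hy, hup⟩
    · have : (-c, y) ∈ (PhiB n (C, L, U)).2 :=
        mem_PhiB_snd.2 ⟨c, hT.col_mem hy, .inr ⟨hup, rfl, hyL⟩⟩
      rw [colCandidates, arcSrc_eq hT.arc_left_unique this, neg_neg]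
      exact Finset.mem_insert_self _ _
  · intro d hd
    rcases Finset.mem_insert.1 hd with rfl | hd
    · rw [arcSrc_eq hT.arc_left_unique hx]
      exact hT.neg_le_of_arc_to_left hyL hx
    · obtain ⟨hdl, hyd⟩ := Finset.mem_filter.1 hd
      rw [hT.legalDests_PhiB, Finset.mem_filter] at hdl
      obtain ⟨e, hde, he | rfl⟩ := hT.exists_col_ge_of_transGen hyd hdl.2
      · exact hde.trans (hT.le_of_mem_left hyL he)
      · rw [abs_neg] at hyabs
        have := le_abs_self e
        omega

theorem mem_legalDests_PhiB (hT : IsATB n C L U) (hup : HasUp U c) :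
    c ∈ legalDests n (PhiB n (C, L, U)).2 := by
  obtain ⟨u, hu⟩ := hasUp_iff.1 hup
  rw [hT.legalDests_PhiB]
  exact Finset.mem_filter.2 ⟨hT.col_mem (Finset.mem_union_right _ hu), hup⟩

theorem mem_colClass_PhiB_iff (hT : IsATB n C L U) (hup : HasUp U c) :
    y ∈ colClass n (PhiB n (C, L, U)).2 c ↔ y = c ∨ (y, c) ∈ L := by
  rw [mem_colClass]
  constructor
  · rintro ⟨⟨x, hx⟩, rfl⟩
    rcases hT.arc_cases hx with ⟨-, hyup, -⟩ | ⟨e, hyL, -⟩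
    · exact .inl (colOf_of_mem_legalDests (hT.mem_legalDests_PhiB hyup)).symm
    · rw [hT.colOf_PhiB_of_mem_left hyL]
      exact .inr hyL
  · rintro (rfl | hyL)
    · obtain ⟨x, hx, -⟩ := hT.exists_arc_to_upCol hup
      exact ⟨⟨x, hx⟩, colOf_of_mem_legalDests (hT.mem_legalDests_PhiB hup)⟩
    · exact ⟨hT.exists_arc_to_left hyL, hT.colOf_PhiB_of_mem_left hyL⟩

theorem arcSrc_colClassMin_PhiB (hT : IsATB n C L U) {u : ℤ} (hu : (u, c) ∈ U) :
    arcSrc (PhiB n (C, L, U)).2 (colClassMin n (PhiB n (C, L, U)).2 c) = u := by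
  have hup : HasUp U c := ⟨_, hu, rfl⟩
  have huc : (u, c) ∈ L ∪ U := Finset.mem_union_right _ hu
  set m := colClassMin n (PhiB n (C, L, U)).2 c
  have hmem {y : ℤ} := hT.mem_colClass_PhiB_iff (y := y) hup
  have hm : m = c ∨ (m, c) ∈ L := hmem.1 (colClassMin_mem ⟨c, hmem.2 (.inl rfl)⟩)
  have hum : u < m := by
    rcases hm with hm | hm
    · exact hm ▸ hT.row_lt huc
    · exact (hT.up_le hu (Finset.mem_union_left _ hm)).lt_of_ne
        fun h => hT.not_mem_up_of_mem_left hm (h ▸ hu)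
  refine arcSrc_eq hT.arc_left_unique (mem_PhiB_snd.2 ⟨c, hT.col_mem huc, .inl ⟨hup, ?_⟩⟩)
  refine mem_consecPairsZ_of_forall_le (mem_insert_colRowsB.2 (.inr huc)) ?_ hum fun k hk hkm => ?_
  · rcases hm with hm | hm
    · exact mem_insert_colRowsB.2 (.inl hm)
    · exact mem_insert_colRowsB.2 (.inr (Finset.mem_union_left _ hm))
  · by_contra! huk
    have hmc : m ≤ c := hm.elim le_of_eq fun hm => (hT.row_lt (Finset.mem_union_left _ hm)).le
    have hkc : (k, c) ∈ L ∪ U := (mem_insert_colRowsB.1 hk).resolve_left (by omega)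
    have hkL := hT.mem_left_of_ne_up hu hkc huk.ne'
    exact hkm.not_ge (colClassMin_le (hmem.2 (.inr hkL)))

theorem PsiB_PhiB (hT : IsATB n C L U) : PsiB n (PhiB n (C, L, U)) = (C, L, U) := by
  refine Prod.ext ?_ (Prod.ext ?_ ?_)
  · ext c
    rw [mem_PsiB_fst, hT.legalDests_PhiB, Finset.mem_filter]
    constructor
    · rintro (⟨hc, -⟩ | ⟨⟨h1, -⟩, hneg⟩)
      · exact hc
      · exact ((hT.neg_mem_PhiB_fst_iff h1).1 hneg).1
    · intro hc
      by_cases hup : HasUp U c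
      · exact .inl ⟨hc, hup⟩
      · have h := hT.col_mem_Icc hc
        exact .inr ⟨h, (hT.neg_mem_PhiB_fst_iff h.1).2 ⟨hc, hup⟩⟩
  · ext ⟨y, c⟩
    rw [mem_PsiB_left, hT.exists_arc_to_iff, hT.legalDests_PhiB, Finset.mem_filter]
    constructor
    · rintro ⟨⟨e, hyL⟩ | hyC, hy, rfl⟩
      · rwa [hT.colOf_PhiB_of_mem_left hyL]
      · exact absurd hyC hy
    · intro hyL
      exact ⟨.inl ⟨c, hyL⟩, fun h => hT.row_not_mem (Finset.mem_union_left _ hyL) h.1,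
        hT.colOf_PhiB_of_mem_left hyL⟩
  · ext ⟨u, c⟩
    rw [mem_PsiB_up, hT.legalDests_PhiB, Finset.mem_filter]
    constructor
    · rintro ⟨⟨-, hup⟩, rfl⟩
      obtain ⟨u, hu⟩ := hasUp_iff.1 hup
      rwa [hT.arcSrc_colClassMin_PhiB hu]
    · intro hu
      exact ⟨⟨hT.col_mem (Finset.mem_union_right _ hu), _, hu, rfl⟩,
        (hT.arcSrc_colClassMin_PhiB hu).symm⟩

end IsATB

namespace IsLPB

variable {n : ℕ} {V : Finset ℤ} {A : Finset (ℤ × ℤ)} {v x y z c : ℤ}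

theorem abs_mem (hP : IsLPB n V A) (hv : v ∈ V) : 1 ≤ |v| ∧ |v| ≤ n := hP.1 v hv

theorem arc_lt (hP : IsLPB n V A) : ∀ p ∈ A, p.1 < p.2 := fun p hp => (hP.2.2.1 p hp).2.2

theorem arc_fst_mem (hP : IsLPB n V A) (h : (x, y) ∈ A) : x ∈ V := (hP.2.2.1 _ h).1

theorem arc_snd_mem (hP : IsLPB n V A) (h : (x, y) ∈ A) : y ∈ V := (hP.2.2.1 _ h).2.1

theorem arcSrc_eq (hP : IsLPB n V A) (h : (x, y) ∈ A) : arcSrc A y = x :=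
  _root_.arcSrc_eq hP.2.2.2 h

theorem neg_not_mem (hP : IsLPB n V A) (hv : v ∈ V) : -v ∉ V := by
  have := hP.2.1 |v| (Finset.mem_Icc.2 (hP.abs_mem hv))
  rcases abs_choice v with h | h <;> rw [h] at this
  · tauto
  · rw [neg_neg] at this
    tauto

theorem transGen_lt (hP : IsLPB n V A) (h : TransGen (Arc A) x y) : x < y :=
  Arc.transGen_lt hP.arc_lt h

theorem reflTransGen_le (hP : IsLPB n V A) (h : ReflTransGen (Arc A) x y) : x ≤ y :=
  Arc.reflTransGen_le hP.arc_lt h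

theorem mem_of_mem_legalDests (hP : IsLPB n V A) (hc : c ∈ legalDests n A) : c ∈ V :=
  let ⟨_, hx⟩ := exists_arc_of_mem_legalDests hc
  hP.arc_snd_mem hx

theorem abs_arcSrc_lt_of_mem_legalDests (hP : IsLPB n V A) (hc : c ∈ legalDests n A) :
    |arcSrc A c| < c := by
  obtain ⟨⟨hc1, -⟩, ⟨⟨x, c'⟩, hp, hc', hxc⟩, -⟩ := mem_legalDests.1 hc
  obtain rfl : c = c' := hc'.symm
  rwa [hP.arcSrc_eq hp, ← abs_of_pos (show 0 < c by omega)]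

/-- A positive vertex with an outgoing arc reaches a legal destination: the largest vertex it
reaches is positive, has no outgoing arc, and its incoming arc starts at a positive vertex. -/
theorem exists_legalDest_of_arc (hP : IsLPB n V A) (hy : 0 < y) (hz : (y, z) ∈ A) :
    ∃ c ∈ legalDests n A, TransGen (Arc A) y c := by
  set R := V.filter (TransGen (Arc A) y)
  have hR : R.Nonempty := ⟨z, Finset.mem_filter.2 ⟨hP.arc_snd_mem hz, .single hz⟩⟩
  obtain ⟨hmV, hym⟩ := Finset.mem_filter.1 (R.max'_mem hR)
  set m := R.max' hR
  obtain ⟨p, hyp, hpm⟩ := TransGen.tail'_iff.1 hym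
  have hyp := hP.reflTransGen_le hyp
  have hpm' := hP.arc_lt _ hpm
  have hm := hP.abs_mem hmV
  dsimp only at hpm'
  rw [abs_of_pos (by omega)] at hm
  refine ⟨m, mem_legalDests.2 ⟨hm, ⟨(p, m), hpm, rfl, ?_⟩, ?_⟩, hym⟩
  · rwa [abs_of_pos (by omega), abs_of_pos (by omega)]
  · rintro ⟨m', w⟩ hw (rfl : m' = m)
    have := R.le_max' w (Finset.mem_filter.2 ⟨hP.arc_snd_mem hw, hym.tail hw⟩)
    have := hP.arc_lt _ hw
    dsimp only at this
    omega

theorem lt_colOf (hP : IsLPB n V A) (hy : ∃ x, (x, y) ∈ A) (hyl : y ∉ legalDests n A) :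
    y < colOf n A y := by
  have harc := arcSrc_mem hy
  rcases colOf_cases hyl with h | ⟨-, hr⟩
  · rw [h]
    by_contra! hle
    have hxy := hP.arc_lt _ harc
    have hyV := hP.arc_snd_mem harc
    have hyabs := hP.abs_mem hyV
    dsimp only at hxy
    have hy0 : 0 < y := by cases abs_cases y <;> omega
    rw [abs_of_pos hy0] at hyabs
    -- `y` is not a legal destination: it has an outgoing arc, or its incoming arc is too long
    by_cases hout : ∃ w, (y, w) ∈ A
    · obtain ⟨w, hw⟩ := hout
      obtain ⟨c, hc, hyc⟩ := hP.exists_legalDest_of_arc hy0 hw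
      have := le_colOf_of_transGen hyl hc hyc
      have := hP.transGen_lt hyc
      omega
    · have hxy' : ¬ |arcSrc A y| < y := fun h => hyl (mem_legalDests.2
        ⟨hyabs, ⟨_, harc, rfl, by rwa [abs_of_pos hy0]⟩,
          fun p hp hpy => hout ⟨p.2, by rwa [← hpy]⟩⟩)
      have hx : arcSrc A y = -y := by cases abs_cases (arcSrc A y) <;> omega
      exact hP.neg_not_mem hyV (hx ▸ hP.arc_fst_mem harc)
  · exact hP.transGen_lt hr

theorem arcSrc_neg_of_colOf_eq (hP : IsLPB n V A) (hy : ∃ x, (x, y) ∈ A)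
    (hyl : y ∉ legalDests n A) (h : colOf n A y = -arcSrc A y) : arcSrc A y < 0 := by
  have := hP.lt_colOf hy hyl
  have := hP.arc_lt _ (arcSrc_mem hy)
  dsimp only at this
  omega

theorem colOf_mem_Icc (hP : IsLPB n V A) (hy : ∃ x, (x, y) ∈ A) (hyl : y ∉ legalDests n A) :
    1 ≤ colOf n A y ∧ colOf n A y ≤ n := by
  rcases colOf_cases hyl with h | ⟨hc, -⟩
  · have hneg := hP.arcSrc_neg_of_colOf_eq hy hyl h
    have := hP.abs_mem (hP.arc_fst_mem (arcSrc_mem hy))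
    rw [abs_of_neg hneg] at this
    omega
  · exact (mem_legalDests.1 hc).1

theorem neg_lt_colOf (hP : IsLPB n V A) (hy : ∃ x, (x, y) ∈ A) (hyl : y ∉ legalDests n A) :
    -y < colOf n A y := by
  have := neg_arcSrc_le_colOf (A := A) hyl
  have := hP.arc_lt _ (arcSrc_mem hy)
  dsimp only at this
  omega

end IsLPB

section ColClass

variable {n : ℕ} {A : Finset (ℤ × ℤ)} {y c : ℤ}

theorem mem_colClass_self (hc : c ∈ legalDests n A) : c ∈ colClass n A c :=
  mem_colClass.2 ⟨exists_arc_of_mem_legalDests hc, colOf_of_mem_legalDests hc⟩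

theorem not_mem_legalDests_of_mem_colClass (hy : y ∈ colClass n A c) (hne : y ≠ c) :
    y ∉ legalDests n A :=
  fun h => hne ((colOf_of_mem_legalDests h).symm.trans (mem_colClass.1 hy).2)

theorem colClassMin_mem_of_mem_legalDests (hc : c ∈ legalDests n A) :
    colClassMin n A c ∈ colClass n A c :=
  colClassMin_mem ⟨c, mem_colClass_self hc⟩

end ColClass

namespace IsLPB

variable {n : ℕ} {V : Finset ℤ} {A : Finset (ℤ × ℤ)} {u v y z c : ℤ}

theorem transGen_of_mem_colClass (hP : IsLPB n V A) (hc : c ∈ legalDests n A)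
    (hy : y ∈ colClass n A c) (hne : y ≠ c) : TransGen (Arc A) y c := by
  have hyl := not_mem_legalDests_of_mem_colClass hy hne
  obtain ⟨hyt, rfl⟩ := mem_colClass.1 hy
  rcases colOf_cases hyl with h | ⟨-, hr⟩
  · refine absurd (hP.arc_fst_mem (arcSrc_mem hyt)) ?_
    rw [← neg_neg (arcSrc A y), ← h]
    exact hP.neg_not_mem (hP.mem_of_mem_legalDests hc)
  · exact hr

theorem le_of_mem_colClass (hP : IsLPB n V A) (hc : c ∈ legalDests n A)
    (hy : y ∈ colClass n A c) : y ≤ c := by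
  rcases eq_or_ne y c with rfl | hne
  · exact le_rfl
  · exact (hP.transGen_lt (hP.transGen_of_mem_colClass hc hy hne)).le

/-- Walking back from `z` towards `u ∈ colClass n A c` along a path `u →⁺ z →* c`, one meets the
class of `c`: if `z` is not in it, the column of `z` exceeds `c`, which forces it to be `-q`
for the predecessor `q` of `z`, and one continues from `q` (for `q = u`, the inequality
`-u < colOf u = c` rules this out). -/
theorem exists_mem_colClass_of_transGen (hP : IsLPB n V A) (hc : c ∈ legalDests n A)
    (hu : u ∈ colClass n A c) (huz : TransGen (Arc A) u z) (hzc : ReflTransGen (Arc A) z c) :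
    ∃ w ∈ colClass n A c, u < w ∧ w ≤ z := by
  have huc : u ≠ c := (hP.transGen_lt (huz.trans_left hzc)).ne
  have hul := not_mem_legalDests_of_mem_colClass hu huc
  have step : ∀ {q z : ℤ}, (q, z) ∈ A → ReflTransGen (Arc A) u q → ReflTransGen (Arc A) z c →
      z ∈ colClass n A c ∨ (c < colOf n A z ∧ colOf n A z = -q) := by
    intro q z hqz huq hzc
    rcases reflTransGen_iff_eq_or_transGen.1 hzc with rfl | hzc
    · exact .inl (mem_colClass_self hc)
    obtain ⟨w, hzw, -⟩ := TransGen.head'_iff.1 hzc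
    have hzl : z ∉ legalDests n A := fun h => not_arc_of_mem_legalDests h hzw
    rcases (le_colOf_of_transGen hzl hc hzc).eq_or_lt with h | h
    · exact .inl (mem_colClass.2 ⟨⟨q, hqz⟩, h.symm⟩)
    rcases colOf_cases hzl with h' | ⟨hdl, hzd⟩
    · exact .inr ⟨h, by rw [h', hP.arcSrc_eq hqz]⟩
    · have hud : TransGen (Arc A) u (colOf n A z) := TransGen.trans_right (huq.tail hqz) hzd
      have := le_colOf_of_transGen hul hdl hud
      rw [(mem_colClass.1 hu).2] at this
      omega
  induction huz with
  | single huz =>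
    rcases step huz .refl hzc with hz | ⟨h, h'⟩
    · exact ⟨_, hz, hP.arc_lt _ huz, le_rfl⟩
    · have := hP.neg_lt_colOf (mem_colClass.1 hu).1 hul
      rw [(mem_colClass.1 hu).2] at this
      omega
  | @tail q z huq hqz ih =>
    rcases step hqz huq.to_reflTransGen hzc with hz | -
    · exact ⟨_, hz, hP.transGen_lt (huq.tail hqz), le_rfl⟩
    · obtain ⟨w, hw, huw, hwq⟩ := ih (ReflTransGen.head hqz hzc)
      exact ⟨w, hw, huw, hwq.trans (hP.arc_lt _ hqz).le⟩

theorem mem_of_consecutive_mem_colClass (hP : IsLPB n V A) (hc : c ∈ legalDests n A)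
    (hu : u ∈ colClass n A c) (hv : v ∈ colClass n A c) (huv : u < v)
    (hcons : ∀ w ∈ colClass n A c, ¬(u < w ∧ w < v)) : (u, v) ∈ A := by
  have hvc : ReflTransGen (Arc A) v c := by
    rcases eq_or_ne v c with rfl | hne
    · exact .refl
    · exact (hP.transGen_of_mem_colClass hc hv hne).to_reflTransGen
  have huc : ReflTransGen (Arc A) u c :=
    (hP.transGen_of_mem_colClass hc hu (huv.trans_le (hP.le_of_mem_colClass hc hv)).ne)
      |>.to_reflTransGen
  have huv' : TransGen (Arc A) u v := by
    rcases Arc.reflTransGen_total hP.2.2.2 huc hvc with h | h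
    · exact (reflTransGen_iff_eq_or_transGen.1 h).resolve_left huv.ne'
    · exact absurd (hP.reflTransGen_le h) (not_le.2 huv)
  obtain ⟨p, hup, hpv⟩ := TransGen.tail'_iff.1 huv'
  rcases reflTransGen_iff_eq_or_transGen.1 hup with rfl | hup
  · exact hpv
  · obtain ⟨w, hw, huw, hwp⟩ := hP.exists_mem_colClass_of_transGen hc hu hup (.head hpv hvc)
    exact absurd ⟨huw, hwp.trans_lt (hP.arc_lt _ hpv)⟩ (hcons w hw)

end IsLPB

namespace IsLPB

variable {n : ℕ} {V : Finset ℤ} {A : Finset (ℤ × ℤ)} {r x y d c : ℤ}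

theorem arcSrc_colClassMin_mem (hc : c ∈ legalDests n A) :
    (arcSrc A (colClassMin n A c), colClassMin n A c) ∈ A :=
  arcSrc_mem (mem_colClass.1 (colClassMin_mem_of_mem_legalDests hc)).1

theorem arcSrc_colClassMin_lt (hP : IsLPB n V A) (hc : c ∈ legalDests n A) :
    arcSrc A (colClassMin n A c) < colClassMin n A c :=
  hP.arc_lt _ (arcSrc_colClassMin_mem hc)

theorem arcSrc_colClassMin_not_mem_colClass (hP : IsLPB n V A) (hc : c ∈ legalDests n A) :
    arcSrc A (colClassMin n A c) ∉ colClass n A c :=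
  fun h => (colClassMin_le h).not_gt (hP.arcSrc_colClassMin_lt hc)

theorem transGen_arcSrc_colClassMin (hP : IsLPB n V A) (hc : c ∈ legalDests n A) :
    TransGen (Arc A) (arcSrc A (colClassMin n A c)) c := by
  have hmc : ReflTransGen (Arc A) (colClassMin n A c) c := by
    rcases eq_or_ne (colClassMin n A c) c with h | h
    · rw [h]
    · exact (hP.transGen_of_mem_colClass hc (colClassMin_mem_of_mem_legalDests hc) h)
        |>.to_reflTransGen
  exact TransGen.head' (arcSrc_colClassMin_mem hc) hmc

theorem neg_arcSrc_colClassMin_lt (hP : IsLPB n V A) (hc : c ∈ legalDests n A) :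
    -arcSrc A (colClassMin n A c) < c := by
  have hm := colClassMin_mem_of_mem_legalDests hc
  have harc := arcSrc_colClassMin_mem hc
  by_cases hml : colClassMin n A c ∈ legalDests n A
  · have hmc : colClassMin n A c = c :=
      (colOf_of_mem_legalDests hml).symm.trans (mem_colClass.1 hm).2
    rw [hmc]
    exact (neg_le_abs _).trans_lt (hP.abs_arcSrc_lt_of_mem_legalDests hc)
  · have h := neg_arcSrc_le_colOf hml
    rw [(mem_colClass.1 hm).2] at h
    refine h.lt_of_ne fun he => hP.neg_not_mem (hP.mem_of_mem_legalDests hc) ?_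
    rw [← he, neg_neg]
    exact hP.arc_fst_mem harc

theorem mem_PsiB_fst_of_neg_mem (hd : 1 ≤ d ∧ d ≤ n) (h : -d ∈ V) : d ∈ (PsiB n (V, A)).1 :=
  mem_PsiB_fst.2 (.inr ⟨hd, h⟩)

theorem colOf_mem_PsiB_fst (hP : IsLPB n V A) (hy : ∃ x, (x, y) ∈ A) (hyl : y ∉ legalDests n A) :
    colOf n A y ∈ (PsiB n (V, A)).1 := by
  rcases colOf_cases hyl with h | ⟨h, -⟩
  · refine mem_PsiB_fst_of_neg_mem (hP.colOf_mem_Icc hy hyl) ?_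
    rw [h, neg_neg]
    exact hP.arc_fst_mem (arcSrc_mem hy)
  · exact mem_PsiB_fst.2 (.inl h)

theorem not_mem_PsiB_fst (hP : IsLPB n V A) (hr : r ∈ V) (hrl : r ∉ legalDests n A) :
    r ∉ (PsiB n (V, A)).1 := by
  rw [mem_PsiB_fst]
  rintro (h | ⟨-, h⟩)
  · exact hrl h
  · exact hP.neg_not_mem hr h

theorem isCell_PsiB (hP : IsLPB n V A) (hr : r ∈ V) (hrl : r ∉ legalDests n A)
    (hlt : r < d) (hneg : -r < d) :
    (1 ≤ r ∧ r ≤ n ∧ r ∉ (PsiB n (V, A)).1 ∧ r < d) ∨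
      (r < 0 ∧ -r ∈ (PsiB n (V, A)).1 ∧ -r < d) := by
  have habs := hP.abs_mem hr
  rcases lt_or_gt_of_ne (show r ≠ 0 by rintro rfl; simp at habs) with hr0 | hr0
  · rw [abs_of_neg hr0] at habs
    exact .inr ⟨hr0, mem_PsiB_fst_of_neg_mem habs (by rwa [neg_neg]), hneg⟩
  · rw [abs_of_pos hr0] at habs
    exact .inl ⟨habs.1, habs.2, hP.not_mem_PsiB_fst hr hrl, hlt⟩

theorem PsiB_cell (hP : IsLPB n V A) {p : ℤ × ℤ}
    (hp : p ∈ (PsiB n (V, A)).2.1 ∪ (PsiB n (V, A)).2.2) :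
    p.2 ∈ (PsiB n (V, A)).1 ∧
      ((1 ≤ p.1 ∧ p.1 ≤ n ∧ p.1 ∉ (PsiB n (V, A)).1 ∧ p.1 < p.2) ∨
        (p.1 < 0 ∧ -p.1 ∈ (PsiB n (V, A)).1 ∧ -p.1 < p.2)) := by
  obtain ⟨r, d⟩ := p
  rcases Finset.mem_union.1 hp with h | h
  · obtain ⟨hy, hyl, rfl⟩ := mem_PsiB_left.1 h
    exact ⟨hP.colOf_mem_PsiB_fst hy hyl, hP.isCell_PsiB (hP.arc_snd_mem (arcSrc_mem hy)) hyl
      (hP.lt_colOf hy hyl) (hP.neg_lt_colOf hy hyl)⟩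
  · obtain ⟨hd, rfl⟩ := mem_PsiB_up.1 h
    have harc := arcSrc_colClassMin_mem hd
    exact ⟨mem_PsiB_fst.2 (.inl hd), hP.isCell_PsiB (hP.arc_fst_mem harc)
      (fun h => not_arc_of_mem_legalDests h harc)
      (hP.transGen_lt (hP.transGen_arcSrc_colClassMin hd)) (hP.neg_arcSrc_colClassMin_lt hd)⟩

theorem PsiB_not_mem_of_mem_left (hP : IsLPB n V A) {c' : ℤ} (hL : (y, d) ∈ (PsiB n (V, A)).2.1)
    (hdc' : d < c') : (y, c') ∉ (PsiB n (V, A)).2.1 ∪ (PsiB n (V, A)).2.2 := by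
  obtain ⟨hy, hyl, rfl⟩ := mem_PsiB_left.1 hL
  intro hmem
  rcases Finset.mem_union.1 hmem with h | h
  · obtain ⟨-, -, h⟩ := mem_PsiB_left.1 h
    omega
  · obtain ⟨hc', rfl⟩ := mem_PsiB_up.1 h
    have := le_colOf_of_transGen hyl hc' (hP.transGen_arcSrc_colClassMin hc')
    omega

theorem PsiB_not_mem_of_mem_up (hP : IsLPB n V A) {x' : ℤ} (hU : (x, d) ∈ (PsiB n (V, A)).2.2)
    (hx' : x' < x) : (x', d) ∉ (PsiB n (V, A)).2.1 ∪ (PsiB n (V, A)).2.2 := by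
  obtain ⟨hd, rfl⟩ := mem_PsiB_up.1 hU
  intro hmem
  rcases Finset.mem_union.1 hmem with h | h
  · obtain ⟨hx, -, he⟩ := mem_PsiB_left.1 h
    have := colClassMin_le (mem_colClass.2 ⟨hx, he⟩)
    have := hP.arcSrc_colClassMin_lt hd
    omega
  · obtain ⟨-, rfl⟩ := mem_PsiB_up.1 h
    exact lt_irrefl _ hx'

theorem PsiB_isATB (hP : IsLPB n V A) :
    IsATB n (PsiB n (V, A)).1 (PsiB n (V, A)).2.1 (PsiB n (V, A)).2.2 := by
  refine ⟨fun c hc => ?_, ?_, fun p hp => hP.PsiB_cell hp,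
    fun p hp c' h => hP.PsiB_not_mem_of_mem_left hp h,
    fun p hp x' h => hP.PsiB_not_mem_of_mem_up hp h, ?_⟩
  · rcases mem_PsiB_fst.1 hc with h | ⟨h, -⟩
    · exact Finset.mem_Icc.2 (mem_legalDests.1 h).1
    · exact Finset.mem_Icc.2 h
  · refine Finset.disjoint_left.2 fun ⟨y, d⟩ hL hU => ?_
    obtain ⟨hy, -, hyd⟩ := mem_PsiB_left.1 hL
    obtain ⟨hd, hy'⟩ := mem_PsiB_up.1 hU
    exact hP.arcSrc_colClassMin_not_mem_colClass hd (hy' ▸ mem_colClass.2 ⟨hy, hyd⟩)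
  · rintro i - hup c' hmem
    have hiV := hP.mem_of_mem_legalDests (hasUp_PsiB.1 hup)
    rcases Finset.mem_union.1 hmem with h | h
    · obtain ⟨hy, -⟩ := mem_PsiB_left.1 h
      exact hP.neg_not_mem hiV (hP.arc_snd_mem (arcSrc_mem hy))
    · obtain ⟨hc', he⟩ := mem_PsiB_up.1 h
      exact hP.neg_not_mem hiV (he ▸ hP.arc_fst_mem (arcSrc_colClassMin_mem hc'))

end IsLPB

namespace IsLPB

variable {n : ℕ} {V : Finset ℤ} {A : Finset (ℤ × ℤ)} {v x y c : ℤ}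

theorem insert_colRowsB_PsiB (hc : c ∈ legalDests n A) :
    insert c (colRowsB (PsiB n (V, A)).2.1 (PsiB n (V, A)).2.2 c) =
      insert (arcSrc A (colClassMin n A c)) (colClass n A c) := by
  ext z
  simp only [Finset.mem_insert, mem_colRowsB_PsiB, mem_colClass, hc, true_and]
  constructor
  · rintro (rfl | ⟨hz, -, h⟩ | h)
    · exact .inr ⟨exists_arc_of_mem_legalDests hc, colOf_of_mem_legalDests hc⟩
    · exact .inr ⟨hz, h⟩
    · exact .inl h
  · rintro (h | ⟨hz, h⟩)
    · exact .inr (.inr h)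
    · by_cases hzl : z ∈ legalDests n A
      · exact .inl ((colOf_of_mem_legalDests hzl).symm.trans h)
      · exact .inr (.inl ⟨hz, hzl, h⟩)

theorem mem_consecPairsZ_colClass_iff (hP : IsLPB n V A) (hc : c ∈ legalDests n A) :
    (x, y) ∈ consecPairsZ (insert (arcSrc A (colClassMin n A c)) (colClass n A c)) ↔
      y ∈ colClass n A c ∧ x = arcSrc A y := by
  set u := arcSrc A (colClassMin n A c)
  have hum : u < colClassMin n A c := hP.arcSrc_colClassMin_lt hc
  have hmem : ∀ {z}, z ∈ insert u (colClass n A c) → z = u ∨ u < z := fun hz =>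
    (Finset.mem_insert.1 hz).imp_right fun hz => hum.trans_le (colClassMin_le hz)
  have hsrc : ∀ {y}, y ∈ colClass n A c →
      (arcSrc A y, y) ∈ consecPairsZ (insert u (colClass n A c)) := by
    intro y hy
    rcases (colClassMin_le hy).eq_or_lt with rfl | hmy
    · refine mem_consecPairsZ_of_forall_le (Finset.mem_insert_self _ _)
        (Finset.mem_insert_of_mem hy) hum fun k hk hkm => ?_
      rcases Finset.mem_insert.1 hk with rfl | hk
      · exact le_rfl
      · exact absurd (colClassMin_le hk) (not_le.2 hkm)
    · obtain ⟨a, hma, hay⟩ := exists_mem_consecPairsZ_of_lt (S := insert u (colClass n A c))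
        (Finset.mem_insert_of_mem (colClassMin_mem ⟨y, hy⟩)) (Finset.mem_insert_of_mem hy) hmy
      obtain ⟨haS, -, hlt, hbetween⟩ := mem_consecPairsZ.1 hay
      have ha : a ∈ colClass n A c := (Finset.mem_insert.1 haS).resolve_left (by omega)
      have harc := hP.mem_of_consecutive_mem_colClass hc ha hy hlt
        fun w hw => hbetween w (Finset.mem_insert_of_mem hw)
      rwa [hP.arcSrc_eq harc]
  constructor
  · intro h
    obtain ⟨hx, hy, hxy, -⟩ := mem_consecPairsZ.1 h
    have hy' : y ∈ colClass n A c :=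
      (Finset.mem_insert.1 hy).resolve_left fun hyu => by rcases hmem hx with rfl | h' <;> omega
    exact ⟨hy', fst_eq_of_mem_consecPairsZ h (hsrc hy')⟩
  · rintro ⟨hy, rfl⟩
    exact hsrc hy

theorem PhiB_PsiB_snd (hP : IsLPB n V A) : (PhiB n (PsiB n (V, A))).2 = A := by
  ext ⟨x, y⟩
  rw [mem_PhiB_snd]
  constructor
  · rintro ⟨c, -, ⟨hup, hcp⟩ | ⟨hup, rfl, hyc⟩⟩
    · rw [hasUp_PsiB] at hup
      rw [insert_colRowsB_PsiB hup, hP.mem_consecPairsZ_colClass_iff hup] at hcp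
      obtain ⟨hy, rfl⟩ := hcp
      exact arcSrc_mem (mem_colClass.1 hy).1
    · rw [hasUp_PsiB] at hup
      obtain ⟨hy, hyl, rfl⟩ := mem_PsiB_left.1 hyc
      rcases colOf_cases hyl with h | ⟨h, -⟩
      · rw [h, neg_neg]
        exact arcSrc_mem hy
      · exact absurd h hup
  · intro hxy
    have hy : ∃ x, (x, y) ∈ A := ⟨x, hxy⟩
    by_cases hd : colOf n A y ∈ legalDests n A
    · refine ⟨colOf n A y, mem_PsiB_fst.2 (.inl hd), .inl ⟨hasUp_PsiB.2 hd, ?_⟩⟩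
      rw [insert_colRowsB_PsiB hd, hP.mem_consecPairsZ_colClass_iff hd, hP.arcSrc_eq hxy]
      exact ⟨mem_colClass.2 ⟨hy, rfl⟩, rfl⟩
    · have hyl : y ∉ legalDests n A := fun h => hd (by rwa [colOf_of_mem_legalDests h])
      have hcol : colOf n A y = -x := by
        rw [← hP.arcSrc_eq hxy]
        exact (colOf_cases hyl).resolve_right fun h => hd h.1
      refine ⟨colOf n A y, hP.colOf_mem_PsiB_fst hy hyl,
        .inr ⟨mt hasUp_PsiB.1 hd, by omega, mem_PsiB_left.2 ⟨hy, hyl, rfl⟩⟩⟩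

theorem PhiB_PsiB_fst (hP : IsLPB n V A) : (PhiB n (PsiB n (V, A))).1 = V := by
  ext v
  rw [mem_PhiB_fst]
  simp only [hasUp_PsiB]
  constructor
  · rintro (⟨h1, h2, hv⟩ | ⟨-, hv⟩ | ⟨c, hc, hcl, rfl⟩)
    · rcases hP.2.1 v (Finset.mem_Icc.2 ⟨h1, h2⟩) with ⟨h, -⟩ | ⟨h, -⟩
      · exact h
      · exact absurd (mem_PsiB_fst_of_neg_mem ⟨h1, h2⟩ h) hv
    · exact hP.mem_of_mem_legalDests hv
    · exact (mem_PsiB_fst.1 hc).resolve_left hcl |>.2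
  · intro hv
    have habs := hP.abs_mem hv
    rcases lt_or_gt_of_ne (show v ≠ 0 by rintro rfl; simp at habs) with hv0 | hv0
    · rw [abs_of_neg hv0] at habs
      refine .inr (.inr ⟨-v, mem_PsiB_fst_of_neg_mem habs (by rwa [neg_neg]), fun h => ?_,
        (neg_neg v).symm⟩)
      exact hP.neg_not_mem hv (hP.mem_of_mem_legalDests h)
    · rw [abs_of_pos hv0] at habs
      by_cases hvl : v ∈ legalDests n A
      · exact .inr (.inl ⟨mem_PsiB_fst.2 (.inl hvl), hvl⟩)
      · exact .inl ⟨habs.1, habs.2, hP.not_mem_PsiB_fst hv hvl⟩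

theorem PhiB_PsiB (hP : IsLPB n V A) : PhiB n (PsiB n (V, A)) = (V, A) :=
  Prod.ext hP.PhiB_PsiB_fst hP.PhiB_PsiB_snd

end IsLPB

/-- the map `Φ_B` is a bijection from type B alternative
tableaux of size `n` onto type B linked partitions of `{1,…,n}`; moreover
the labels of the unrestricted rows of `T` are exactly the labels of the
origins and singletons of `Φ_B(T)`. -/
theorem PhiB_bijection (n : ℕ) :
    Set.BijOn (PhiB n) (ATB n : Set _) (LPB n : Set _) ∧
    ∀ T ∈ ATB n,
      (rowsB n T.1).filter
          (fun x => (∀ p ∈ T.2.1, p.1 ≠ x) ∧ ∀ p ∈ T.2.2, p.2 ≠ |x|) =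
        (PhiB n T).1.filter (fun v => ∀ p ∈ (PhiB n T).2, p.2 ≠ v) := by
  refine ⟨⟨fun T hT => ?_, fun T hT T' hT' h => ?_, fun P hP => ?_⟩, fun T hT => ?_⟩
  · exact mem_LPB.2 (mem_ATB.1 hT).PhiB_isLPB
  · calc T = PsiB n (PhiB n T) := (mem_ATB.1 hT).PsiB_PhiB.symm
      _ = PsiB n (PhiB n T') := by rw [h]
      _ = T' := (mem_ATB.1 hT').PsiB_PhiB
  · exact ⟨PsiB n P, mem_ATB.2 (mem_LPB.1 hP).PsiB_isATB, (mem_LPB.1 hP).PhiB_PsiB⟩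
  · exact (mem_ATB.1 hT).unrestricted_rows_eq
end

section
/- For every n ≥ 1, the sum over all type B linked partitions τ of {1,...,n} of x^{os(τ)-1} equals 2^n (x+1)_{n-1}, where os(τ) is the number of origins plus singletons in the linear representation of τ. -/
open Finset Polynomial
open scoped Classical

/-! A type B linked partition is a choice of signs, giving one of `2 ^ n` vertex sets of size
`n`, together with a linked partition of that vertex set, and the latter only sees the order of
the vertices. When a new largest vertex `m` is added to `k` vertices, either no arc enters `m`,
which makes it one more origin or singleton, or a single arc enters it from one of the `k`
others. So each new vertex multiplies the generating polynomial of `os` by `x + k`, and on `n`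
vertices it is `x (x + 1) ⋯ (x + n - 1)`. -/

/-- Linked partitions on an arbitrary finite vertex set, as sets of arcs. -/
noncomputable def arcsOn (V : Finset ℤ) : Finset (Finset (ℤ × ℤ)) :=
  (V ×ˢ V).powerset.filter fun A =>
    (∀ p ∈ A, p.1 < p.2) ∧ ∀ p ∈ A, ∀ q ∈ A, p.2 = q.2 → p.1 = q.1

section arcsOn

variable {V : Finset ℤ} {A : Finset (ℤ × ℤ)} {m : ℤ}

lemma mem_arcsOn :
    A ∈ arcsOn V ↔ A ⊆ V ×ˢ V ∧ (∀ p ∈ A, p.1 < p.2) ∧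
      ∀ p ∈ A, ∀ q ∈ A, p.2 = q.2 → p.1 = q.1 := by
  simp [arcsOn]

lemma arcsOn_mono {W : Finset ℤ} (h : V ⊆ W) : arcsOn V ⊆ arcsOn W := fun A hA => by
  rw [mem_arcsOn] at hA ⊢
  exact ⟨hA.1.trans (product_subset_product h h), hA.2⟩

lemma snd_ne_of_mem_arcsOn (hA : A ∈ arcsOn V) (hm : m ∉ V) {p : ℤ × ℤ} (hp : p ∈ A) :
    p.2 ≠ m := by
  rintro rfl
  exact hm (mem_product.1 (mem_arcsOn.1 hA |>.1 hp)).2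

lemma one_le_osB (hV : V.Nonempty) (hA : A ∈ arcsOn V) : 1 ≤ osB V A := by
  refine card_pos.2 ⟨V.min' hV, mem_filter.2 ⟨V.min'_mem hV, fun p hp hpv => ?_⟩⟩
  obtain ⟨hsub, hlt, -⟩ := mem_arcsOn.1 hA
  have := V.min'_le p.1 (mem_product.1 (hsub hp)).1
  have := hlt p hp
  omega

lemma osB_insert (hm : m ∉ V) (hA : ∀ p ∈ A, p.2 ≠ m) : osB (insert m V) A = osB V A + 1 := by
  rw [osB, filter_insert, if_pos hA, card_insert_of_notMem fun h => hm (mem_filter.1 h).1, osB]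

lemma osB_insert_insert (hm : m ∉ V) (c : ℤ) :
    osB (insert m V) (insert (c, m) A) = osB V A := by
  rw [osB, filter_insert, if_neg fun h => h (c, m) (mem_insert_self _ _) rfl, osB]
  refine congrArg card (filter_congr fun v hv => ?_)
  simp only [forall_mem_insert]
  exact and_iff_right fun h => ne_of_mem_of_not_mem hv hm h.symm

lemma insert_mem_arcsOn_insert (hm : ∀ v ∈ V, v < m) (hA : A ∈ arcsOn V) {c : ℤ} (hc : c ∈ V) :
    insert (c, m) A ∈ arcsOn (insert m V) := by
  have hmV : m ∉ V := fun h => lt_irrefl m (hm m h)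
  obtain ⟨hsub, hlt, huniq⟩ := mem_arcsOn.1 hA
  refine mem_arcsOn.2 ⟨insert_subset (mem_product.2 ⟨mem_insert_of_mem hc, mem_insert_self _ _⟩)
    (hsub.trans (product_subset_product (subset_insert _ _) (subset_insert _ _))),
    (forall_mem_insert _ _ _).2 ⟨hm c hc, hlt⟩, ?_⟩
  simp only [forall_mem_insert]
  refine ⟨⟨fun _ => trivial, fun q hq h => absurd h.symm (snd_ne_of_mem_arcsOn hA hmV hq)⟩,
    fun p hp => ⟨fun h => absurd h (snd_ne_of_mem_arcsOn hA hmV hp), huniq p hp⟩⟩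

lemma mem_arcsOn_insert (hm : ∀ v ∈ V, v < m) (hA : A ∈ arcsOn (insert m V)) :
    A ∈ arcsOn V ∨ ∃ A' ∈ arcsOn V, ∃ c ∈ V, insert (c, m) A' = A := by
  obtain ⟨hsub, hlt, huniq⟩ := mem_arcsOn.1 hA
  have mem_of_snd_ne {p : ℤ × ℤ} (hp : p ∈ A) (hpm : p.2 ≠ m) : p ∈ V ×ˢ V := by
    obtain ⟨h1, h2⟩ := mem_product.1 (hsub hp)
    have h2V := (mem_insert.1 h2).resolve_left hpm
    have := hm _ h2V
    have := hlt p hp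
    exact mem_product.2 ⟨(mem_insert.1 h1).resolve_left (by omega), h2V⟩
  by_cases h : ∃ c, (c, m) ∈ A
  · obtain ⟨c, hc⟩ := h
    refine Or.inr ⟨A.erase (c, m), mem_arcsOn.2 ⟨fun p hp => ?_,
      fun p hp => hlt p (mem_of_mem_erase hp),
      fun p hp q hq => huniq p (mem_of_mem_erase hp) q (mem_of_mem_erase hq)⟩,
      c, (mem_insert.1 (mem_product.1 (hsub hc)).1).resolve_left (hlt _ hc).ne,
      insert_erase hc⟩
    refine mem_of_snd_ne (mem_of_mem_erase hp) fun hpm => ne_of_mem_erase hp ?_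
    exact Prod.ext (huniq p (mem_of_mem_erase hp) _ hc hpm) hpm
  · simp only [not_exists] at h
    refine Or.inl (mem_arcsOn.2 ⟨fun p hp => mem_of_snd_ne hp ?_, hlt, huniq⟩)
    rintro hpm
    exact h p.1 (by rwa [← hpm])

lemma sum_arcsOn_insert {M : Type*} [AddCommMonoid M] (hm : ∀ v ∈ V, v < m) (f : Finset (ℤ × ℤ) → M) :
    ∑ A ∈ arcsOn (insert m V), f A =
      ∑ A ∈ arcsOn V, (f A + ∑ c ∈ V, f (insert (c, m) A)) := by
  have hmV : m ∉ V := fun h => lt_irrefl m (hm m h)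
  set g : Finset (ℤ × ℤ) × ℤ → Finset (ℤ × ℤ) := fun s => insert (s.2, m) s.1
  have hsplit : arcsOn (insert m V) = arcsOn V ∪ (arcsOn V ×ˢ V).image g := by
    ext A
    constructor
    · intro hA
      rcases mem_arcsOn_insert hm hA with h | ⟨A', hA', c, hc, rfl⟩
      · exact mem_union_left _ h
      · exact mem_union_right _ (mem_image.2 ⟨(A', c), mem_product.2 ⟨hA', hc⟩, rfl⟩)
    · rw [mem_union, mem_image]
      rintro (h | ⟨⟨A', c⟩, hs, rfl⟩)
      · exact arcsOn_mono (subset_insert _ _) h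
      · exact insert_mem_arcsOn_insert hm (mem_product.1 hs).1 (mem_product.1 hs).2
  have hdisj : Disjoint (arcsOn V) ((arcsOn V ×ˢ V).image g) := by
    rw [disjoint_right]
    rintro _ hs hA
    obtain ⟨⟨A', c⟩, -, rfl⟩ := mem_image.1 hs
    exact snd_ne_of_mem_arcsOn hA hmV (mem_insert_self _ _) rfl
  have hinj : Set.InjOn g (arcsOn V ×ˢ V : Finset _) := by
    rintro ⟨A, c⟩ hs ⟨A', c'⟩ hs' (h : insert (c, m) A = insert (c', m) A')
    obtain ⟨hA, -⟩ := mem_product.1 hs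
    obtain ⟨hA', -⟩ := mem_product.1 hs'
    have hnot {B : Finset (ℤ × ℤ)} (hB : B ∈ arcsOn V) (d : ℤ) : (d, m) ∉ B :=
      fun hd => snd_ne_of_mem_arcsOn hB hmV hd rfl
    have hc : c = c' := by
      have := h ▸ mem_insert_self (c, m) A
      rcases mem_insert.1 this with h' | h'
      · exact (Prod.ext_iff.1 h').1
      · exact absurd h' (hnot hA' c)
    subst hc
    have := congrArg (Finset.erase · (c, m)) h
    simp only [erase_insert (hnot hA c), erase_insert (hnot hA' c)] at this
    rw [this]
  rw [hsplit, sum_union hdisj, sum_image hinj, sum_product, ← sum_add_distrib]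

end arcsOn

theorem sum_arcsOn_pow_osB_sub_one {R : Type*} [CommSemiring R] (x : R) {V : Finset ℤ}
    (hV : V.Nonempty) :
    ∑ A ∈ arcsOn V, x ^ (osB V A - 1) = (ascPochhammer R (#V - 1)).eval (x + 1) := by
  induction V using Finset.induction_on_max with
  | empty => exact absurd hV not_nonempty_empty
  | insert m V hm ih =>
    have hmV : m ∉ V := fun h => lt_irrefl m (hm m h)
    rw [sum_arcsOn_insert hm, card_insert_of_notMem hmV, Nat.add_sub_cancel]
    rcases V.eq_empty_or_nonempty with rfl | hV'
    · simp [arcsOn, filter_singleton, osB]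
    calc ∑ A ∈ arcsOn V, (x ^ (osB (insert m V) A - 1) +
            ∑ c ∈ V, x ^ (osB (insert m V) (insert (c, m) A) - 1))
        = ∑ A ∈ arcsOn V, (x + #V) * x ^ (osB V A - 1) := sum_congr rfl fun A hA => by
          rw [osB_insert hmV fun p hp => snd_ne_of_mem_arcsOn hA hmV hp, Nat.add_sub_cancel]
          simp_rw [osB_insert_insert hmV]
          rw [sum_const, nsmul_eq_mul, ← Nat.sub_add_cancel (one_le_osB hV' hA), pow_succ,
            Nat.add_sub_cancel]
          ring
      _ = (x + #V) * (ascPochhammer R (#V - 1)).eval (x + 1) := by rw [← mul_sum, ih hV']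
      _ = (ascPochhammer R #V).eval (x + 1) := by
          obtain ⟨k, hk⟩ : ∃ k, #V = k + 1 := ⟨#V - 1, (Nat.sub_add_cancel (card_pos.2 hV')).symm⟩
          rw [hk, ascPochhammer_succ_eval, Nat.add_sub_cancel]
          push_cast
          ring

/-- The vertex set `{ε_i i}` of a type B linked partition whose negated elements form `I`. -/
noncomputable def signedVertices (n : ℕ) (I : Finset ℤ) : Finset ℤ :=
  (Icc 1 (n : ℤ)).image fun i => if i ∈ I then -i else i

section signedVertices

variable {n : ℕ} {I : Finset ℤ}

lemma mem_signedVertices {v : ℤ} :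
    v ∈ signedVertices n I ↔ |v| ∈ Icc 1 (n : ℤ) ∧ (v < 0 ↔ |v| ∈ I) := by
  simp only [signedVertices, mem_image, mem_Icc]
  constructor
  · rintro ⟨i, hi, rfl⟩
    split_ifs with h
    · rw [abs_neg, abs_of_pos (by omega)]
      exact ⟨hi, iff_of_true (by omega) h⟩
    · rw [abs_of_pos (by omega)]
      exact ⟨hi, iff_of_false (by omega) h⟩
  · rintro ⟨hv, hsign⟩
    refine ⟨|v|, hv, ?_⟩
    rcases lt_or_ge v 0 with h | h
    · rw [if_pos (hsign.1 h), abs_of_neg h, neg_neg]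
    · rw [if_neg fun h' => (not_lt.2 h) (hsign.2 h'), abs_of_nonneg h]

lemma neg_mem_signedVertices {i : ℤ} (hi : 0 < i) :
    -i ∈ signedVertices n I ↔ i ∈ Icc 1 (n : ℤ) ∧ i ∈ I := by
  rw [mem_signedVertices, abs_neg, abs_of_pos hi, neg_lt_zero, iff_true_left hi]

lemma mem_signedVertices_of_pos {i : ℤ} (hi : 0 < i) :
    i ∈ signedVertices n I ↔ i ∈ Icc 1 (n : ℤ) ∧ i ∉ I := by
  rw [mem_signedVertices, abs_of_pos hi, iff_false_left hi.not_gt]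

lemma card_signedVertices : #(signedVertices n I) = n := by
  rw [signedVertices, card_image_of_injOn, Int.card_Icc, add_sub_cancel_right, Int.toNat_natCast]
  intro i hi j hj h
  simp only [coe_Icc, Set.mem_Icc] at hi hj h
  split_ifs at h <;> omega

lemma signedVertices_injOn :
    Set.InjOn (signedVertices n) ((Icc 1 (n : ℤ)).powerset : Finset (Finset ℤ)) := by
  intro I hI J hJ h
  simp only [coe_powerset, Set.mem_preimage, Set.mem_powerset_iff, coe_subset] at hI hJ
  ext i
  by_cases hi : i ∈ Icc 1 (n : ℤ)
  · have hi0 : 0 < i := by rw [mem_Icc] at hi; omega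
    have key (K : Finset ℤ) : i ∈ K ↔ -i ∈ signedVertices n K := by
      rw [neg_mem_signedVertices hi0, and_iff_right hi]
    rw [key, key, h]
  · exact iff_of_false (fun h => hi (hI h)) (fun h => hi (hJ h))

lemma exists_signedVertices_eq_iff {V : Finset ℤ} :
    (∃ I ⊆ Icc 1 (n : ℤ), signedVertices n I = V) ↔
      (∀ v ∈ V, 1 ≤ |v| ∧ |v| ≤ (n : ℤ)) ∧
        ∀ i ∈ Icc 1 (n : ℤ), (i ∈ V ∧ -i ∉ V) ∨ (-i ∈ V ∧ i ∉ V) := by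
  constructor
  · rintro ⟨I, -, rfl⟩
    refine ⟨fun v hv => mem_Icc.1 (mem_signedVertices.1 hv).1, fun i hi => ?_⟩
    have hi0 : 0 < i := by rw [mem_Icc] at hi; omega
    rw [neg_mem_signedVertices hi0, mem_signedVertices_of_pos hi0]
    by_cases h : i ∈ I <;> simp [h, hi]
  · rintro ⟨habs, hsign⟩
    refine ⟨(Icc 1 (n : ℤ)).filter (-· ∈ V), filter_subset _ _, ?_⟩
    ext v
    rw [mem_signedVertices, mem_filter]
    have hv := habs v
    rcases lt_trichotomy v 0 with h | rfl | h
    · rw [abs_of_neg h, neg_neg, mem_Icc] at *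
      grind
    · exact iff_of_false (by simp) fun h0 => by simpa using hv h0
    · have hv' := hsign v
      rw [abs_of_pos h, mem_Icc] at *
      grind

end signedVertices

lemma mem_LPB_iff {n : ℕ} {T : Finset ℤ × Finset (ℤ × ℤ)} :
    T ∈ LPB n ↔ (∃ I ⊆ Icc 1 (n : ℤ), signedVertices n I = T.1) ∧ T.2 ∈ arcsOn T.1 := by
  rw [exists_signedVertices_eq_iff, mem_arcsOn, LPB, mem_filter, IsLPB]
  constructor
  · rintro ⟨-, habs, hsign, harcs, huniq⟩
    exact ⟨⟨habs, hsign⟩, fun p hp => mem_product.2 ⟨(harcs p hp).1, (harcs p hp).2.1⟩,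
      fun p hp => (harcs p hp).2.2, huniq⟩
  · rintro ⟨⟨habs, hsign⟩, hsub, hlt, huniq⟩
    have hV : T.1 ⊆ Icc (-(n : ℤ)) n := fun v hv => mem_Icc.2 (abs_le.1 (habs v hv).2)
    refine ⟨mem_product.2 ⟨mem_powerset.2 hV, mem_powerset.2
      (hsub.trans (product_subset_product hV hV))⟩, habs, hsign,
      fun p hp => ⟨(mem_product.1 (hsub hp)).1, (mem_product.1 (hsub hp)).2, hlt p hp⟩, huniq⟩

lemma sum_LPB_eq_sum_powerset {M : Type*} [AddCommMonoid M] (n : ℕ) (f : Finset ℤ × Finset (ℤ × ℤ) → M) :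
    ∑ T ∈ LPB n, f T = ∑ I ∈ (Icc 1 (n : ℤ)).powerset,
      ∑ A ∈ arcsOn (signedVertices n I), f (signedVertices n I, A) := by
  rw [← sum_sigma (Icc 1 (n : ℤ)).powerset (fun I => arcsOn (signedVertices n I))
    fun s => f (signedVertices n s.1, s.2)]
  symm
  refine sum_bij (fun s _ => (signedVertices n s.1, s.2)) (fun s hs => ?_) ?_ ?_ fun _ _ => rfl
  · obtain ⟨hI, hA⟩ := mem_sigma.1 hs
    exact mem_LPB_iff.2 ⟨⟨s.1, mem_powerset.1 hI, rfl⟩, hA⟩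
  · rintro ⟨I, A⟩ hs ⟨J, B⟩ ht h
    obtain ⟨hIJ, rfl⟩ := Prod.mk.inj h
    obtain rfl := signedVertices_injOn (mem_sigma.1 hs).1 (mem_sigma.1 ht).1 hIJ
    rfl
  · intro T hT
    obtain ⟨⟨I, hI, hIV⟩, hA⟩ := mem_LPB_iff.1 hT
    exact ⟨⟨I, T.2⟩, mem_sigma.2 ⟨mem_powerset.2 hI, hIV ▸ hA⟩, by rw [hIV]⟩

/-- for `n ≥ 1`,
`∑_{τ ∈ ℒ^B_n} x^{os τ - 1} = 2^n (x+1)_{n-1}`. -/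
theorem lpb_enumeration (n : ℕ) (hn : 1 ≤ n) (x : ℤ) :
    ∑ T ∈ LPB n, x ^ (osB T.1 T.2 - 1) =
      2 ^ n * (ascPochhammer ℤ (n - 1)).eval (x + 1) := by
  have hne (I : Finset ℤ) : (signedVertices n I).Nonempty := by
    rw [← card_pos, card_signedVertices]
    exact hn
  rw [sum_LPB_eq_sum_powerset n fun T => x ^ (osB T.1 T.2 - 1)]
  simp_rw [sum_arcsOn_pow_osB_sub_one x (hne _), card_signedVertices]
  rw [sum_const, card_powerset, Int.card_Icc, add_sub_cancel_right, Int.toNat_natCast,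
    nsmul_eq_mul, Nat.cast_pow, Nat.cast_ofNat]
end
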